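/- arXiv:1812.04259 — 8 statements merged into one kernel-verified Lean document; each statement's English description precedes it below -/
import Mathlib

section
/- Let 1<p<∞, let ρ:[0,∞)→(0,∞) be a differentiable probability density, and let ν:[0,1)→[0,∞) be an increasing twice differentiable bijection with ν(0)=0 and ν(t)→∞ as t→1. If ‖h_{1,p*}‖_{L_∞(0,1)}<∞ and ‖h_{2,p*}‖_{L_p(0,1)}<∞, then for every f∈F_{1,p}(ℝ_+) the function g_{f,ν} belongs to W_{1,p} and ‖g_{f,ν}'‖_{L_p(0,1)} ≤ (‖h_{1,p*}‖_{L_∞(0,1)} + ‖h_{2,p*}‖_{L_p(0,1)})·‖f'‖_{L_p(0,∞)}. -/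
open MeasureTheory Set Filter ENNReal Topology

/-!
Write `g = (f ∘ ν) · w` with `w = (ρ ∘ ν) ν'`, so that `g' = ν' (f' ∘ ν) w + (f ∘ ν) w'`.
The first term is `h₁ · (f' ∘ ν) ν'^{1/p}`, and the substitution `x = ν t` shows
`‖(f' ∘ ν) ν'^{1/p}‖_{L_p(0,1)} = ‖f'‖_{L_p(0,∞)}`. Since `w' ν^{1/p*} = h₂`, the second term is
controlled by Hölder's inequality `|f x| ≤ ‖f'‖_{L_p} x^{1/p*}`.
That `g` is the primitive of `g'` is integration by parts for the absolutely continuous functions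
`f ∘ ν` and `w` on `[s, t]` with `s > 0` (where `w'` is integrable because `ν^{1/p*}` is bounded
below), followed by `s → 0`.
-/

namespace MeasureTheory.MemLp

theorem intervalIntegrable_of_Ioi {F : ℝ → ℝ} {P : ℝ≥0∞} (hP : 1 ≤ P)
    (hF : MemLp F P (volume.restrict (Ioi 0))) {x : ℝ} (hx : 0 ≤ x) :
    IntervalIntegrable F volume 0 x := by
  rw [intervalIntegrable_iff_integrableOn_Ioc_of_le hx]
  have : IsFiniteMeasure (volume.restrict (Ioc (0:ℝ) x)) := ⟨by simp⟩
  exact (hF.mono_measure (Measure.restrict_mono Ioc_subset_Ioi_self le_rfl)).integrable hP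

theorem abs_intervalIntegral_le_of_Ioi {F : ℝ → ℝ} {p : ℝ} (hp : 1 ≤ p)
    (hF : MemLp F (.ofReal p) (volume.restrict (Ioi 0))) {x : ℝ} (hx : 0 ≤ x) :
    |∫ y in (0:ℝ)..x, F y| ≤
      (eLpNorm F (.ofReal p) (volume.restrict (Ioi 0))).toReal * x ^ (1 - 1 / p) := by
  have hq : 0 ≤ 1 - 1 / p := by rw [sub_nonneg, div_le_one (by linarith)]; exact hp
  set μ := volume.restrict (Ioc (0:ℝ) x)
  have : IsFiniteMeasure μ := ⟨by simp [μ]⟩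
  have hμ : μ ≤ volume.restrict (Ioi 0) := Measure.restrict_mono Ioc_subset_Ioi_self le_rfl
  have hHolder : eLpNorm F 1 μ ≤
      eLpNorm F (.ofReal p) (volume.restrict (Ioi 0)) * ENNReal.ofReal x ^ (1 - 1 / p) :=
    calc eLpNorm F 1 μ
        ≤ eLpNorm F (.ofReal p) μ *
            μ univ ^ (1 / (1 : ℝ≥0∞).toReal - 1 / (ENNReal.ofReal p).toReal) :=
          eLpNorm_le_eLpNorm_mul_rpow_measure_univ (by simpa using ofReal_le_ofReal hp)
            (hF.1.mono_measure hμ)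
      _ ≤ _ := by
          rw [toReal_ofReal (by linarith), ENNReal.toReal_one, div_one]
          gcongr ?_ * ?_ ^ _
          · exact eLpNorm_mono_measure F hμ
          · simp [μ]
  calc |∫ y in (0:ℝ)..x, F y| = ‖∫ y, F y ∂μ‖ := by
        rw [intervalIntegral.integral_of_le hx, Real.norm_eq_abs]
    _ ≤ (eLpNorm F 1 μ).toReal := by
        rw [eLpNorm_one_eq_lintegral_enorm]
        simpa only [ofReal_norm] using norm_integral_le_lintegral_norm F
    _ ≤ _ := by
        refine (toReal_mono (mul_ne_top hF.2.ne (rpow_ne_top_of_nonneg hq ofReal_ne_top))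
          hHolder).trans_eq ?_
        rw [toReal_mul, ← toReal_rpow, toReal_ofReal hx]

end MeasureTheory.MemLp

theorem integral_mul_add_mul_eq_sub_of_eq_primitive {a d A W : ℝ → ℝ} {s t : ℝ}
    (ha : IntervalIntegrable a volume s t) (hd : IntervalIntegrable d volume s t)
    (hA : ∀ x ∈ uIcc s t, A x = A s + ∫ y in s..x, a y)
    (hW : ∀ x ∈ uIcc s t, W x = W s + ∫ y in s..x, d y) :
    ∫ x in s..t, a x * W x + A x * d x = A t * W t - A s * W s := by
  set A₀ : ℝ → ℝ := fun x => A s + ∫ y in s..x, a y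
  set W₀ : ℝ → ℝ := fun x => W s + ∫ y in s..x, d y
  have hA₀ : AbsolutelyContinuousOnInterval A₀ s t :=
    (LipschitzWith.const (A s)).lipschitzOnWith.absolutelyContinuousOnInterval.add
      (ha.absolutelyContinuousOnInterval_intervalIntegral left_mem_uIcc)
  have hW₀ : AbsolutelyContinuousOnInterval W₀ s t :=
    (LipschitzWith.const (W s)).lipschitzOnWith.absolutelyContinuousOnInterval.add
      (hd.absolutelyContinuousOnInterval_intervalIntegral left_mem_uIcc)
  have hparts := hA₀.integral_deriv_mul_eq_sub hW₀
  have eA : ∀ x ∈ uIcc s t, A₀ x = A x := fun x hx => (hA x hx).symm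
  have eW : ∀ x ∈ uIcc s t, W₀ x = W x := fun x hx => (hW x hx).symm
  rw [eA t right_mem_uIcc, eW t right_mem_uIcc, eA s left_mem_uIcc, eW s left_mem_uIcc] at hparts
  rw [← hparts]
  refine intervalIntegral.integral_congr_ae ?_
  filter_upwards [ha.ae_hasDerivAt_integral, hd.ae_hasDerivAt_integral] with x hxa hxd hx
  have hx' : x ∈ uIcc s t := uIoc_subset_uIcc hx
  rw [((hxa hx' s left_mem_uIcc).const_add (A s)).deriv,
    ((hxd hx' s left_mem_uIcc).const_add (W s)).deriv, hA x hx', ← eW x hx']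

theorem integral_eq_sub_of_forall_Ioo {g G : ℝ → ℝ} {a b : ℝ} (hab : a < b)
    (hg : ContinuousWithinAt g (Ioi a) a) (hG : IntervalIntegrable G volume a b)
    (h : ∀ s ∈ Ioo a b, ∫ x in s..b, G x = g b - g s) :
    ∫ x in a..b, G x = g b - g a := by
  have hprim : Tendsto (fun s => ∫ x in s..b, G x) (𝓝[>] a) (𝓝 (∫ x in a..b, G x)) := by
    have := intervalIntegral.continuousOn_primitive_interval_left
      ((intervalIntegrable_iff' (f := G)).1 hG) a (by simp)
    rw [← nhdsWithin_Ioo_eq_nhdsGT hab]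
    exact (this.mono (by rw [uIcc_of_le hab.le]; exact Ioo_subset_Icc_self)).tendsto
  refine tendsto_nhds_unique hprim ((tendsto_const_nhds.sub hg).congr' ?_)
  filter_upwards [Ioo_mem_nhdsGT hab] with s hs
  exact (h s hs).symm

theorem integral_deriv_mul_add_mul_deriv_of_primitive {u u' v v' : ℝ → ℝ} {a b : ℝ} (hab : a < b)
    (hu' : IntervalIntegrable u' volume a b) (hu : ∀ x ∈ Icc a b, u x = ∫ y in a..x, u' y)
    (hv : ∀ x ∈ Icc a b, HasDerivAt v (v' x) x)
    (hv' : ∀ s ∈ Ioo a b, IntervalIntegrable v' volume s b)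
    (hint : IntervalIntegrable (fun x => u' x * v x + u x * v' x) volume a b) :
    ∫ x in a..b, u' x * v x + u x * v' x = u b * v b := by
  have hIcc : Icc a b = uIcc a b := (uIcc_of_le hab.le).symm
  have ha : a ∈ Icc a b := left_mem_Icc.2 hab.le
  have hu_cont : ContinuousWithinAt u (Ioi a) a := by
    have := intervalIntegral.continuousOn_primitive_interval' hu' left_mem_uIcc a left_mem_uIcc
    rw [← hIcc] at this
    exact (this.congr hu (hu a ha)).mono_of_mem_nhdsWithin
      (mem_of_superset (Ioo_mem_nhdsGT hab) Ioo_subset_Icc_self)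
  have h := integral_eq_sub_of_forall_Ioo hab
    (hu_cont.mul (hv a ha).continuousAt.continuousWithinAt) hint fun s hs => ?_
  · rw [h, Pi.mul_apply, Pi.mul_apply, hu a ha, intervalIntegral.integral_same, zero_mul, sub_zero]
  have hs' : s ∈ uIcc a b := hIcc ▸ Ioo_subset_Icc_self hs
  have hsub : uIcc s b ⊆ uIcc a b := uIcc_subset_uIcc hs' right_mem_uIcc
  refine integral_mul_add_mul_eq_sub_of_eq_primitive (hu'.mono_set hsub) (hv' s hs)
    (fun x hx => ?_) (fun x hx => ?_)
  · have hx' := hsub hx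
    rw [hu x (hIcc ▸ hx'), hu s (hIcc ▸ hs'), intervalIntegral.integral_add_adjacent_intervals
      (hu'.mono_set (uIcc_subset_uIcc left_mem_uIcc hs'))
      (hu'.mono_set (uIcc_subset_uIcc hs' hx'))]
  · rw [intervalIntegral.integral_eq_sub_of_hasDerivAt
      (fun y hy => hv y (hIcc ▸ uIcc_subset_uIcc hs' (hsub hx) hy))
      ((hv' s hs).mono_set (uIcc_subset_uIcc left_mem_uIcc hx))]
    ring

theorem aestronglyMeasurable_deriv_comp {φ φ' ν : ℝ → ℝ} {μ : Measure ℝ} (hν : AEMeasurable ν μ)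
    (h : ∀ᵐ x ∂μ, HasDerivAt φ (φ' (ν x)) (ν x)) : AEStronglyMeasurable (fun x => φ' (ν x)) μ :=
  ((measurable_deriv φ).comp_aemeasurable hν).aestronglyMeasurable.congr
    (h.mono fun _ hx => hx.deriv)

theorem continuousOn_Ici_of_eq_primitive {f F : ℝ → ℝ} {a : ℝ}
    (hF : ∀ x, a ≤ x → IntervalIntegrable F volume a x)
    (hf : ∀ x, a ≤ x → f x = ∫ y in a..x, F y) : ContinuousOn f (Ici a) := by
  intro x hx
  have hx1 : a ≤ x + 1 := by linarith [mem_Ici.1 hx]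
  have hcont := intervalIntegral.continuousOn_primitive_interval' (hF _ hx1) left_mem_uIcc
  rw [uIcc_of_le hx1] at hcont
  refine ((hcont x ⟨hx, by linarith⟩).congr (fun y hy => hf y hy.1)
    (hf x hx)).mono_of_mem_nhdsWithin ?_
  rw [← Ici_inter_Iic]
  exact inter_mem_nhdsWithin _ (Iic_mem_nhds (by linarith))

theorem HasDerivAt.nonneg_of_monotoneOn_Ico {g : ℝ → ℝ} {g' a b x : ℝ} (hd : HasDerivAt g g' x)
    (hg : MonotoneOn g (Ico a b)) (hx : x ∈ Ico a b) : 0 ≤ g' :=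
  hd.hasDerivWithinAt.nonneg_of_monotoneOn
    (by rw [accPt_principal_iff_nhdsWithin, Ico_sdiff_left]; exact left_nhdsWithin_Ioo_neBot hx.2)
    (hg.mono (Ico_subset_Ico_left hx.1))

structure IsIncreasingReparam (ν ν' : ℝ → ℝ) : Prop where
  map_zero : ν 0 = 0
  strictMonoOn : StrictMonoOn ν (Ico 0 1)
  surjOn : SurjOn ν (Ico 0 1) (Ici 0)
  hasDerivAt : ∀ t ∈ Ico (0:ℝ) 1, HasDerivAt ν (ν' t) t

namespace IsIncreasingReparam

variable {ρ ρ' ν ν' ν'' F : ℝ → ℝ}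

theorem pos (hν : IsIncreasingReparam ν ν') {t : ℝ} (ht : t ∈ Ioo 0 1) : 0 < ν t :=
  hν.map_zero ▸ hν.strictMonoOn ⟨le_rfl, one_pos⟩ (Ioo_subset_Ico_self ht) ht.1

theorem nonneg (hν : IsIncreasingReparam ν ν') {t : ℝ} (ht : t ∈ Ico 0 1) : 0 ≤ ν t :=
  hν.map_zero ▸ hν.strictMonoOn.monotoneOn ⟨le_rfl, one_pos⟩ ht ht.1

theorem deriv_nonneg (hν : IsIncreasingReparam ν ν') {t : ℝ} (ht : t ∈ Ico 0 1) : 0 ≤ ν' t :=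
  (hν.hasDerivAt t ht).nonneg_of_monotoneOn_Ico hν.strictMonoOn.monotoneOn ht

theorem continuousOn (hν : IsIncreasingReparam ν ν') : ContinuousOn ν (Ico 0 1) :=
  fun t ht => (hν.hasDerivAt t ht).continuousAt.continuousWithinAt

theorem image_Ioo_zero_one (hν : IsIncreasingReparam ν ν') : ν '' Ioo 0 1 = Ioi 0 := by
  refine Subset.antisymm (image_subset_iff.2 fun t ht => hν.pos ht) fun y hy => ?_
  obtain ⟨t, ht, rfl⟩ := hν.surjOn (mem_Ici.2 (le_of_lt hy))
  refine ⟨t, ⟨lt_of_le_of_ne ht.1 ?_, ht.2⟩, rfl⟩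
  rintro rfl
  exact hy.ne' hν.map_zero

theorem image_Ioo_zero (hν : IsIncreasingReparam ν ν') {t : ℝ} (ht : t ∈ Ioo 0 1) :
    ν '' Ioo 0 t = Ioo 0 (ν t) := by
  have hIoo : Ioo 0 t = Ioo 0 1 ∩ ν ⁻¹' Iio (ν t) := by
    ext s
    refine ⟨fun hs => ⟨⟨hs.1, hs.2.trans ht.2⟩, ?_⟩, fun hs => ⟨hs.1.1, ?_⟩⟩
    · exact hν.strictMonoOn ⟨hs.1.le, hs.2.trans ht.2⟩ (Ioo_subset_Ico_self ht) hs.2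
    · exact (hν.strictMonoOn.lt_iff_lt (Ioo_subset_Ico_self hs.1)
        (Ioo_subset_Ico_self ht)).1 hs.2
  rw [hIoo, image_inter_preimage, hν.image_Ioo_zero_one, Ioi_inter_Iio]

theorem hasDerivWithinAt (hν : IsIncreasingReparam ν ν') {s : Set ℝ} (hs : s ⊆ Ico 0 1) :
    ∀ x ∈ s, HasDerivWithinAt ν (ν' x) s x :=
  fun x hx => (hν.hasDerivAt x (hs hx)).hasDerivWithinAt

theorem intervalIntegral_comp_mul_deriv (hν : IsIncreasingReparam ν ν') (F : ℝ → ℝ) {t : ℝ}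
    (ht : t ∈ Ico 0 1) : ∫ s in (0:ℝ)..t, ν' s * F (ν s) = ∫ y in (0:ℝ)..ν t, F y := by
  rcases ht.1.eq_or_lt with rfl | h0
  · simp [hν.map_zero]
  have ht' : t ∈ Ioo 0 1 := ⟨h0, ht.2⟩
  have hsub : Ioo 0 t ⊆ Ico (0:ℝ) 1 := fun s hs => ⟨hs.1.le, hs.2.trans ht.2⟩
  rw [intervalIntegral.integral_of_le ht.1, intervalIntegral.integral_of_le (hν.pos ht').le,
    integral_Ioc_eq_integral_Ioo, integral_Ioc_eq_integral_Ioo, ← hν.image_Ioo_zero ht',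
    integral_image_eq_integral_abs_deriv_smul measurableSet_Ioo (hν.hasDerivWithinAt hsub)
      (hν.strictMonoOn.injOn.mono hsub)]
  refine setIntegral_congr_fun measurableSet_Ioo fun s hs => ?_
  rw [smul_eq_mul, abs_of_nonneg (hν.deriv_nonneg (hsub hs))]

theorem intervalIntegrable_comp_mul_deriv (hν : IsIncreasingReparam ν ν') {F : ℝ → ℝ} {t : ℝ}
    (ht : t ∈ Ico 0 1) (hF : IntervalIntegrable F volume 0 (ν t)) :
    IntervalIntegrable (fun s => ν' s * F (ν s)) volume 0 t := by
  rcases ht.1.eq_or_lt with rfl | h0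
  · exact IntervalIntegrable.refl
  have ht' : t ∈ Ioo 0 1 := ⟨h0, ht.2⟩
  have hsub : Ioo 0 t ⊆ Ico (0:ℝ) 1 := fun s hs => ⟨hs.1.le, hs.2.trans ht.2⟩
  rw [intervalIntegrable_iff_integrableOn_Ioo_of_le ht.1]
  rw [intervalIntegrable_iff_integrableOn_Ioo_of_le (hν.pos ht').le, ← hν.image_Ioo_zero ht',
    integrableOn_image_iff_integrableOn_abs_deriv_smul measurableSet_Ioo
      (hν.hasDerivWithinAt hsub) (hν.strictMonoOn.injOn.mono hsub)] at hF
  refine hF.congr_fun (fun s hs => ?_) measurableSet_Ioo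
  simp only [smul_eq_mul, abs_of_nonneg (hν.deriv_nonneg (hsub hs))]

theorem eLpNorm_comp_mul_rpow_deriv (hν : IsIncreasingReparam ν ν') (F : ℝ → ℝ) {p : ℝ}
    (hp : 0 < p) :
    eLpNorm (fun s => F (ν s) * ν' s ^ (1 / p)) (.ofReal p) (volume.restrict (Ioo 0 1)) =
      eLpNorm F (.ofReal p) (volume.restrict (Ioi 0)) := by
  have hp0 : ENNReal.ofReal p ≠ 0 := (ofReal_pos.2 hp).ne'
  rw [eLpNorm_eq_lintegral_rpow_enorm_toReal hp0 ofReal_ne_top,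
    eLpNorm_eq_lintegral_rpow_enorm_toReal hp0 ofReal_ne_top, toReal_ofReal hp.le,
    ← hν.image_Ioo_zero_one, lintegral_image_eq_lintegral_abs_deriv_mul measurableSet_Ioo
      (hν.hasDerivWithinAt Ioo_subset_Ico_self) (hν.strictMonoOn.injOn.mono Ioo_subset_Ico_self)]
  congr 1
  refine setLIntegral_congr_fun measurableSet_Ioo fun s hs => ?_
  have hd := hν.deriv_nonneg (Ioo_subset_Ico_self hs)
  rw [enorm_mul, ENNReal.mul_rpow_of_nonneg _ _ hp.le, Real.enorm_of_nonneg (Real.rpow_nonneg hd _),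
    ENNReal.ofReal_rpow_of_nonneg (Real.rpow_nonneg hd _) hp.le, ← Real.rpow_mul hd,
    one_div_mul_cancel hp.ne', Real.rpow_one, abs_of_nonneg hd, mul_comm]

theorem aemeasurable (hν : IsIncreasingReparam ν ν') :
    AEMeasurable ν (volume.restrict (Ioo 0 1)) :=
  (hν.continuousOn.mono Ioo_subset_Ico_self).aemeasurable measurableSet_Ioo

theorem aestronglyMeasurable_deriv (hν : IsIncreasingReparam ν ν') :
    AEStronglyMeasurable ν' (volume.restrict (Ioo 0 1)) :=
  aestronglyMeasurable_deriv_comp (φ := ν) aemeasurable_id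
    ((ae_restrict_mem measurableSet_Ioo).mono fun t ht => hν.hasDerivAt t (Ioo_subset_Ico_self ht))

theorem aestronglyMeasurable_comp (hν : IsIncreasingReparam ν ν') (hρ : ContinuousOn ρ (Ici 0)) :
    AEStronglyMeasurable (fun t => ρ (ν t)) (volume.restrict (Ioo 0 1)) :=
  ((hρ.comp hν.continuousOn fun _ ht => hν.nonneg ht).mono Ioo_subset_Ico_self).aestronglyMeasurable
    measurableSet_Ioo

theorem eLpNorm_comp_mul_deriv_mul_le (hν : IsIncreasingReparam ν ν') (hF : StronglyMeasurable F)
    (r : ℝ → ℝ) {p q : ℝ} (hp : 0 < p) (hq : q = 1 - 1 / p) :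
    eLpNorm (fun s => ν' s * F (ν s) * (r s * ν' s)) (.ofReal p) (volume.restrict (Ioo 0 1)) ≤
      eLpNorm (fun s => r s * ν' s ^ (1 + q)) ⊤ (volume.restrict (Ioo 0 1)) *
        eLpNorm F (.ofReal p) (volume.restrict (Ioi 0)) := by
  rw [← hν.eLpNorm_comp_mul_rpow_deriv F hp]
  refine (eLpNorm_congr_ae ?_).trans_le (eLpNorm_smul_le_eLpNorm_top_mul_eLpNorm _
    ((hF.measurable.comp_aemeasurable hν.aemeasurable).aestronglyMeasurable.mul
      (hν.aestronglyMeasurable_deriv.aemeasurable.pow_const _).aestronglyMeasurable) _)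
  filter_upwards [ae_restrict_mem measurableSet_Ioo] with s hs
  have hd := hν.deriv_nonneg (Ioo_subset_Ico_self hs)
  have h2 : 1 + q + 1 / p = 2 := by rw [hq]; ring
  have hsplit : ν' s ^ (1 + q) * ν' s ^ (1 / p) = ν' s * ν' s := by
    rw [← Real.rpow_add' hd (by rw [h2]; norm_num), h2, Real.rpow_two, sq]
  simp only [smul_eq_mul, Pi.mul_apply, Function.comp_apply]
  linear_combination (-(r s * F (ν s))) * hsplit

theorem eLpNorm_comp_mul_le (hν : IsIncreasingReparam ν ν') {f D : ℝ → ℝ} {c q : ℝ} (hc : 0 ≤ c)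
    (hf : ∀ x, 0 ≤ x → |f x| ≤ c * x ^ q) (P : ℝ≥0∞) :
    eLpNorm (fun s => f (ν s) * D s) P (volume.restrict (Ioo 0 1)) ≤
      ENNReal.ofReal c * eLpNorm (fun s => D s * ν s ^ q) P (volume.restrict (Ioo 0 1)) := by
  rw [← Real.enorm_of_nonneg hc, ← eLpNorm_const_smul]
  refine eLpNorm_mono_ae ?_
  filter_upwards [ae_restrict_mem measurableSet_Ioo] with s hs
  have hνs := hν.nonneg (Ioo_subset_Ico_self hs)
  simp only [Pi.smul_apply, smul_eq_mul, Real.norm_eq_abs, abs_mul, abs_of_nonneg hc,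
    abs_of_nonneg (Real.rpow_nonneg hνs q)]
  calc |f (ν s)| * |D s| ≤ c * ν s ^ q * |D s| := by gcongr; exact hf _ hνs
    _ = c * (|D s| * ν s ^ q) := by ring

theorem intervalIntegrable_of_integrableOn_mul_rpow (hν : IsIncreasingReparam ν ν') {D : ℝ → ℝ}
    {q : ℝ} (hq : 0 ≤ q) (hD : AEStronglyMeasurable D (volume.restrict (Ioo 0 1)))
    (h : IntegrableOn (fun s => D s * ν s ^ q) (Ioo 0 1)) {s t : ℝ} (hs : 0 < s) (hst : s ≤ t)
    (ht : t < 1) : IntervalIntegrable D volume s t := by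
  have hsub : Ioc s t ⊆ Ioo 0 1 := fun u hu => ⟨hs.trans hu.1, hu.2.trans_lt ht⟩
  have hνs : 0 < ν s ^ q := Real.rpow_pos_of_pos (hν.pos ⟨hs, hst.trans_lt ht⟩) q
  rw [intervalIntegrable_iff_integrableOn_Ioc_of_le hst]
  refine ((h.mono_set hsub).const_mul (ν s ^ q)⁻¹).mono
    (hD.mono_measure (Measure.restrict_mono hsub le_rfl)) ?_
  filter_upwards [ae_restrict_mem measurableSet_Ioc] with u hu
  have hνu : ν s ^ q ≤ ν u ^ q := Real.rpow_le_rpow (hν.nonneg ⟨hs.le, hst.trans_lt ht⟩)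
    (hν.strictMonoOn.monotoneOn ⟨hs.le, hst.trans_lt ht⟩ (Ioo_subset_Ico_self (hsub hu)) hu.1.le) hq
  rw [Real.norm_eq_abs, Real.norm_eq_abs, abs_mul, abs_mul, abs_inv, abs_of_pos hνs,
    abs_of_nonneg (hνs.le.trans hνu), le_inv_mul_iff₀ hνs, mul_comm]
  gcongr

theorem hasDerivAt_comp_mul_deriv (hν : IsIncreasingReparam ν ν')
    (hν'' : ∀ t ∈ Ico (0:ℝ) 1, HasDerivAt ν' (ν'' t) t)
    (hρ : ∀ x, 0 ≤ x → HasDerivAt ρ (ρ' x) x) {t : ℝ} (ht : t ∈ Ico 0 1) :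
    HasDerivAt (fun t => ρ (ν t) * ν' t) (ρ' (ν t) * ν' t ^ 2 + ρ (ν t) * ν'' t) t := by
  refine (((hρ _ (hν.nonneg ht)).comp t (hν.hasDerivAt t ht)).mul (hν'' t ht)).congr_deriv ?_
  simp only [Function.comp_apply]
  ring

theorem aestronglyMeasurable_deriv_comp_mul_deriv (hν : IsIncreasingReparam ν ν')
    (hν'' : ∀ t ∈ Ico (0:ℝ) 1, HasDerivAt ν' (ν'' t) t)
    (hρ : ∀ x, 0 ≤ x → HasDerivAt ρ (ρ' x) x) :
    AEStronglyMeasurable (fun t => ρ' (ν t) * ν' t ^ 2 + ρ (ν t) * ν'' t)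
      (volume.restrict (Ioo 0 1)) := by
  have hmem := ae_restrict_mem (μ := volume) (measurableSet_Ioo (a := (0:ℝ)) (b := 1))
  have hρ' := aestronglyMeasurable_deriv_comp hν.aemeasurable
    (hmem.mono fun t ht => hρ _ (hν.nonneg (Ioo_subset_Ico_self ht)))
  have hν''m := aestronglyMeasurable_deriv_comp (φ := ν') aemeasurable_id
    (hmem.mono fun t ht => hν'' t (Ioo_subset_Ico_self ht))
  have hρν := hν.aestronglyMeasurable_comp fun x hx => (hρ x hx).continuousAt.continuousWithinAt
  exact (hρ'.mul (hν.aestronglyMeasurable_deriv.pow 2)).add (hρν.mul hν''m)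

end IsIncreasingReparam

/-- `g_{f,ν}'` by the product rule, with `F` in the role of `f'`. -/
def transformedDeriv (ρ ρ' ν ν' ν'' f F : ℝ → ℝ) (s : ℝ) : ℝ :=
  ν' s * F (ν s) * (ρ (ν s) * ν' s) + f (ν s) * (ρ' (ν s) * ν' s ^ 2 + ρ (ν s) * ν'' s)

section TransformedDeriv

variable {p q : ℝ} {ρ ρ' ν ν' ν'' f F : ℝ → ℝ}

theorem aestronglyMeasurable_transformedDeriv_terms (hν : IsIncreasingReparam ν ν')
    (hν'' : ∀ t ∈ Ico (0:ℝ) 1, HasDerivAt ν' (ν'' t) t)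
    (hρ : ∀ x, 0 ≤ x → HasDerivAt ρ (ρ' x) x) (hF : StronglyMeasurable F)
    (hf : ContinuousOn f (Ici 0)) :
    AEStronglyMeasurable (fun s => ν' s * F (ν s) * (ρ (ν s) * ν' s))
        (volume.restrict (Ioo 0 1)) ∧
      AEStronglyMeasurable (fun s => f (ν s) * (ρ' (ν s) * ν' s ^ 2 + ρ (ν s) * ν'' s))
        (volume.restrict (Ioo 0 1)) := by
  have hρν := hν.aestronglyMeasurable_comp fun x hx => (hρ x hx).continuousAt.continuousWithinAt
  have hFν := (hF.measurable.comp_aemeasurable hν.aemeasurable).aestronglyMeasurable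
  exact ⟨(hν.aestronglyMeasurable_deriv.mul hFν).mul (hρν.mul hν.aestronglyMeasurable_deriv),
    (hν.aestronglyMeasurable_comp hf).mul (hν.aestronglyMeasurable_deriv_comp_mul_deriv hν'' hρ)⟩

theorem eLpNorm_transformedDeriv_le (hν : IsIncreasingReparam ν ν')
    (hν'' : ∀ t ∈ Ico (0:ℝ) 1, HasDerivAt ν' (ν'' t) t)
    (hρ : ∀ x, 0 ≤ x → HasDerivAt ρ (ρ' x) x) (hp : 1 < p) (hq : q = 1 - 1 / p)
    (hF : StronglyMeasurable F) (hFLp : MemLp F (.ofReal p) (volume.restrict (Ioi 0)))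
    (hf : ∀ x, 0 ≤ x → f x = ∫ y in (0:ℝ)..x, F y) :
    eLpNorm (transformedDeriv ρ ρ' ν ν' ν'' f F) (.ofReal p) (volume.restrict (Ioo 0 1)) ≤
      (eLpNorm (fun t => ρ (ν t) * ν' t ^ (1 + q)) ⊤ (volume.restrict (Ioo 0 1)) +
        eLpNorm (fun t => (ρ' (ν t) * ν' t ^ 2 + ρ (ν t) * ν'' t) * ν t ^ q) (.ofReal p)
          (volume.restrict (Ioo 0 1))) * eLpNorm F (.ofReal p) (volume.restrict (Ioi 0)) := by
  have hP : 1 ≤ ENNReal.ofReal p := by simpa using ofReal_le_ofReal hp.le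
  have hmeas := aestronglyMeasurable_transformedDeriv_terms hν hν'' hρ hF
    (continuousOn_Ici_of_eq_primitive (fun x hx => hFLp.intervalIntegrable_of_Ioi hP hx) hf)
  have hbound₁ := hν.eLpNorm_comp_mul_deriv_mul_le hF (fun s => ρ (ν s)) (one_pos.trans hp) hq
  have hbound₂ := hν.eLpNorm_comp_mul_le (D := fun s => ρ' (ν s) * ν' s ^ 2 + ρ (ν s) * ν'' s)
    toReal_nonneg (fun x hx => hq ▸ hf x hx ▸ hFLp.abs_intervalIntegral_le_of_Ioi hp.le hx)
    (.ofReal p)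
  rw [ofReal_toReal hFLp.2.ne] at hbound₂
  calc eLpNorm (transformedDeriv ρ ρ' ν ν' ν'' f F) (.ofReal p) (volume.restrict (Ioo 0 1))
      ≤ eLpNorm (fun s => ν' s * F (ν s) * (ρ (ν s) * ν' s)) (.ofReal p)
            (volume.restrict (Ioo 0 1)) +
          eLpNorm (fun s => f (ν s) * (ρ' (ν s) * ν' s ^ 2 + ρ (ν s) * ν'' s)) (.ofReal p)
            (volume.restrict (Ioo 0 1)) :=
        eLpNorm_add_le hmeas.1 hmeas.2 hP
    _ ≤ _ := add_le_add hbound₁ hbound₂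
    _ = _ := by ring

theorem intervalIntegrable_and_integral_transformedDeriv (hν : IsIncreasingReparam ν ν')
    (hν'' : ∀ t ∈ Ico (0:ℝ) 1, HasDerivAt ν' (ν'' t) t)
    (hρ : ∀ x, 0 ≤ x → HasDerivAt ρ (ρ' x) x) (hq : 0 ≤ q) {P : ℝ≥0∞} (hP : 1 ≤ P)
    (hF : StronglyMeasurable F) (hFLp : MemLp F P (volume.restrict (Ioi 0)))
    (hf : ∀ x, 0 ≤ x → f x = ∫ y in (0:ℝ)..x, F y)
    (hG : eLpNorm (transformedDeriv ρ ρ' ν ν' ν'' f F) P (volume.restrict (Ioo 0 1)) < ⊤)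
    (hh₂ : eLpNorm (fun t => (ρ' (ν t) * ν' t ^ 2 + ρ (ν t) * ν'' t) * ν t ^ q) P
      (volume.restrict (Ioo 0 1)) < ⊤)
    {t : ℝ} (ht : t ∈ Ico 0 1) :
    IntervalIntegrable (transformedDeriv ρ ρ' ν ν' ν'' f F) volume 0 t ∧
      ∫ s in (0:ℝ)..t, transformedDeriv ρ ρ' ν ν' ν'' f F s = f (ν t) * (ρ (ν t) * ν' t) := by
  have hDm := hν.aestronglyMeasurable_deriv_comp_mul_deriv hν'' hρ
  have hmeas := aestronglyMeasurable_transformedDeriv_terms hν hν'' hρ hF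
    (continuousOn_Ici_of_eq_primitive (fun x hx => hFLp.intervalIntegrable_of_Ioi hP hx) hf)
  have hGt : IntervalIntegrable (transformedDeriv ρ ρ' ν ν' ν'' f F) volume 0 t := by
    rw [intervalIntegrable_iff_integrableOn_Ioo_of_le ht.1]
    exact IntegrableOn.mono_set (MemLp.integrable hP ⟨hmeas.1.add hmeas.2, hG⟩)
      (Ioo_subset_Ioo_right ht.2.le)
  have hh₂int : IntegrableOn (fun t => (ρ' (ν t) * ν' t ^ 2 + ρ (ν t) * ν'' t) * ν t ^ q)
      (Ioo 0 1) :=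
    MemLp.integrable hP ⟨hDm.mul (hν.aemeasurable.pow_const q).aestronglyMeasurable, hh₂⟩
  refine ⟨hGt, ?_⟩
  rcases ht.1.eq_or_lt with rfl | h0
  · simp [hν.map_zero, hf 0 le_rfl]
  have hIcc : Icc 0 t ⊆ Ico (0:ℝ) 1 := Icc_subset_Ico_right ht.2
  exact integral_deriv_mul_add_mul_deriv_of_primitive h0
    (hν.intervalIntegrable_comp_mul_deriv ht (hFLp.intervalIntegrable_of_Ioi hP (hν.nonneg ht)))
    (fun x hx => by rw [hν.intervalIntegral_comp_mul_deriv F (hIcc hx), hf _ (hν.nonneg (hIcc hx))])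
    (fun x hx => hν.hasDerivAt_comp_mul_deriv hν'' hρ (hIcc hx))
    (fun s hs => hν.intervalIntegrable_of_integrableOn_mul_rpow hq hDm hh₂int hs.1 hs.2.le ht.2)
    hGt

end TransformedDeriv

theorem transformed_integrand_in_W1p_general
    (p q : ℝ) (hp : 1 < p) (hq : q = 1 - 1 / p)
    (ρ ρ' : ℝ → ℝ)
    (hρ_deriv : ∀ x, 0 ≤ x → HasDerivAt ρ (ρ' x) x)
    (ν ν' ν'' : ℝ → ℝ)
    (hν0 : ν 0 = 0)
    (hν_mono : StrictMonoOn ν (Ico 0 1))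
    (hν_surj : SurjOn ν (Ico (0:ℝ) 1) (Ici 0))
    (hν_deriv : ∀ t ∈ Ico (0:ℝ) 1, HasDerivAt ν (ν' t) t)
    (hν_deriv2 : ∀ t ∈ Ico (0:ℝ) 1, HasDerivAt ν' (ν'' t) t)
    (h₁ h₂ : ℝ → ℝ)
    (hh₁ : ∀ t, h₁ t = ρ (ν t) * ν' t ^ (1 + q))
    (hh₂ : ∀ t, h₂ t = (ρ' (ν t) * ν' t ^ 2 + ρ (ν t) * ν'' t) * ν t ^ q)
    (hh₁_fin : eLpNorm h₁ ⊤ (volume.restrict (Ioo (0:ℝ) 1)) < ⊤)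
    (hh₂_fin : eLpNorm h₂ (ENNReal.ofReal p) (volume.restrict (Ioo (0:ℝ) 1)) < ⊤)
    (f f' : ℝ → ℝ)
    (hf_repr : ∀ x, 0 ≤ x → f x = ∫ s in (0:ℝ)..x, f' s)
    (hf'Lp : MemLp f' (ENNReal.ofReal p) (volume.restrict (Ioi 0)))
    (g : ℝ → ℝ) (hg : ∀ t, g t = f (ν t) * ρ (ν t) * ν' t) :
    g 0 = 0 ∧
    ∃ g' : ℝ → ℝ,
      (∀ t ∈ Ico (0:ℝ) 1, IntervalIntegrable g' volume 0 t ∧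
        g t = ∫ s in (0:ℝ)..t, g' s) ∧
      eLpNorm g' (ENNReal.ofReal p) (volume.restrict (Ioo (0:ℝ) 1)) ≤
        (eLpNorm h₁ ⊤ (volume.restrict (Ioo (0:ℝ) 1)) +
          eLpNorm h₂ (ENNReal.ofReal p) (volume.restrict (Ioo (0:ℝ) 1))) *
          eLpNorm f' (ENNReal.ofReal p) (volume.restrict (Ioi 0)) ∧
      eLpNorm g' (ENNReal.ofReal p) (volume.restrict (Ioo (0:ℝ) 1)) < ⊤ := by
  have hν : IsIncreasingReparam ν ν' := ⟨hν0, hν_mono, hν_surj, hν_deriv⟩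
  have hP : 1 ≤ ENNReal.ofReal p := by simpa using ofReal_le_ofReal hp.le
  have hq0 : 0 ≤ q := by rw [hq, sub_nonneg, div_le_one (one_pos.trans hp)]; exact hp.le
  obtain rfl : h₁ = fun t => ρ (ν t) * ν' t ^ (1 + q) := funext hh₁
  obtain rfl : h₂ = fun t => (ρ' (ν t) * ν' t ^ 2 + ρ (ν t) * ν'' t) * ν t ^ q := funext hh₂
  -- `f' ∘ ν` need not be measurable (`ν` may collapse a set of positive measure), so we pass to
  -- a strongly measurable representative `F` of `f'`.
  obtain ⟨F, hF, hf'F⟩ := hf'Lp.1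
  have hFLp := hf'Lp.ae_eq hf'F
  have hfF : ∀ x, 0 ≤ x → f x = ∫ y in (0:ℝ)..x, F y := fun x hx => by
    rw [hf_repr x hx]
    refine intervalIntegral.integral_congr_ae ?_
    filter_upwards [(ae_restrict_iff' measurableSet_Ioi).1 hf'F] with y hy hyx
    exact hy (uIoc_of_le hx ▸ hyx).1
  have hbound := eLpNorm_transformedDeriv_le hν hν_deriv2 hρ_deriv hp hq hF hFLp hfF
  rw [← eLpNorm_congr_ae hf'F] at hbound
  have hfin := hbound.trans_lt (mul_lt_top (add_lt_top.2 ⟨hh₁_fin, hh₂_fin⟩) hf'Lp.2)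
  refine ⟨by rw [hg, hν0, hfF 0 le_rfl, intervalIntegral.integral_same, zero_mul, zero_mul],
    transformedDeriv ρ ρ' ν ν' ν'' f F, fun t ht => ?_, hbound, hfin⟩
  obtain ⟨hint, heq⟩ := intervalIntegrable_and_integral_transformedDeriv hν hν_deriv2 hρ_deriv
    hq0 hP hF hFLp hfF hfin hh₂_fin ht
  exact ⟨hint, by rw [heq, hg, mul_assoc]⟩

/-- **Theorem 2(ii), `1 < p < ∞`.** Let `1 < p < ∞` with conjugate exponent
`p*` (`1/p* = 1 - 1/p = q`), `ρ` a differentiable positive probability density on `[0,∞)`,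
and `ν : [0,1) → [0,∞)` an increasing twice differentiable bijection with `ν(0) = 0` and
`ν(t) → ∞` as `t → 1⁻`.  With `h_{1,p*}(t) = ρ(ν(t)) (ν'(t))^{1+1/p*}` and
`h_{2,p*}(t) = (d/dt)[ρ(ν(t)) ν'(t)] (ν(t))^{1/p*}`
(the derivative being `ρ'(ν(t)) ν'(t)² + ρ(ν(t)) ν''(t)`),
if `‖h_{1,p*}‖_{L_∞(0,1)} < ∞` and `‖h_{2,p*}‖_{L_p(0,1)} < ∞`, then for every
`f ∈ F_{1,p}(ℝ₊)` the function `g_{f,ν}(t) = f(ν(t)) ρ(ν(t)) ν'(t)` belongs to `W_{1,p}`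
with `‖g_{f,ν}'‖_{L_p(0,1)} ≤ (‖h_{1,p*}‖_{L_∞(0,1)} + ‖h_{2,p*}‖_{L_p(0,1)}) ‖f'‖_{L_p(0,∞)}`. -/
theorem transformed_integrand_in_W1p
    (p q : ℝ) (hp : 1 < p) (hq : q = 1 - 1 / p)
    (ρ ρ' : ℝ → ℝ) (hρ_pos : ∀ x, 0 ≤ x → 0 < ρ x)
    (hρ_deriv : ∀ x, 0 ≤ x → HasDerivAt ρ (ρ' x) x)
    (hρ_int : IntegrableOn ρ (Ioi 0))
    (hρ_prob : ∫ x in Ioi (0:ℝ), ρ x = 1)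
    (ν ν' ν'' : ℝ → ℝ)
    (hν0 : ν 0 = 0)
    (hν_mono : StrictMonoOn ν (Ico 0 1))
    (hν_maps : MapsTo ν (Ico (0:ℝ) 1) (Ici 0))
    (hν_surj : SurjOn ν (Ico (0:ℝ) 1) (Ici 0))
    (hν_deriv : ∀ t ∈ Ico (0:ℝ) 1, HasDerivAt ν (ν' t) t)
    (hν_deriv2 : ∀ t ∈ Ico (0:ℝ) 1, HasDerivAt ν' (ν'' t) t)
    (hν_tendsto : Tendsto ν (nhdsWithin 1 (Iio 1)) atTop)
    (h₁ h₂ : ℝ → ℝ)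
    (hh₁ : ∀ t, h₁ t = ρ (ν t) * ν' t ^ (1 + q))
    (hh₂ : ∀ t, h₂ t = (ρ' (ν t) * ν' t ^ 2 + ρ (ν t) * ν'' t) * ν t ^ q)
    (hh₁_fin : eLpNorm h₁ ⊤ (volume.restrict (Ioo (0:ℝ) 1)) < ⊤)
    (hh₂_fin : eLpNorm h₂ (ENNReal.ofReal p) (volume.restrict (Ioo (0:ℝ) 1)) < ⊤)
    (f f' : ℝ → ℝ)
    (hf0 : f 0 = 0)
    (hf_int : ∀ x, 0 < x → IntervalIntegrable f' volume 0 x)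
    (hf_repr : ∀ x, 0 ≤ x → f x = ∫ s in (0:ℝ)..x, f' s)
    (hf'Lp : MemLp f' (ENNReal.ofReal p) (volume.restrict (Ioi 0)))
    (g : ℝ → ℝ) (hg : ∀ t, g t = f (ν t) * ρ (ν t) * ν' t) :
    g 0 = 0 ∧
    ∃ g' : ℝ → ℝ,
      (∀ t ∈ Ico (0:ℝ) 1, IntervalIntegrable g' volume 0 t ∧
        g t = ∫ s in (0:ℝ)..t, g' s) ∧
      eLpNorm g' (ENNReal.ofReal p) (volume.restrict (Ioo (0:ℝ) 1)) ≤
        (eLpNorm h₁ ⊤ (volume.restrict (Ioo (0:ℝ) 1)) +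
          eLpNorm h₂ (ENNReal.ofReal p) (volume.restrict (Ioo (0:ℝ) 1))) *
          eLpNorm f' (ENNReal.ofReal p) (volume.restrict (Ioi 0)) ∧
      eLpNorm g' (ENNReal.ofReal p) (volume.restrict (Ioo (0:ℝ) 1)) < ⊤ :=
  transformed_integrand_in_W1p_general p q hp hq ρ ρ' hρ_deriv ν ν' ν'' hν0 hν_mono hν_surj hν_deriv
    hν_deriv2 h₁ h₂ hh₁ hh₂ hh₁_fin hh₂_fin f f' hf_repr hf'Lp g hg
end

section
/- Let p=∞, let ρ:[0,∞)→(0,∞) be a differentiable probability density, and let ν:[0,1)→[0,∞) be an increasing twice differentiable bijection with ν(0)=0 and ν(t)→∞ as t→1. If sup_{t∈[0,1)} ρ(ν(t))(ν'(t))² < ∞ and sup_{t∈[0,1)} |(d/dt)[ρ(ν(t))ν'(t)]|·ν(t) < ∞, then for every f∈F_{1,∞}(ℝ_+) the function g_{f,ν} belongs to W_{1,∞} and ess sup_{t∈(0,1)} |g_{f,ν}'(t)| ≤ (sup_{t∈[0,1)} ρ(ν(t))(ν'(t))² + sup_{t∈[0,1)} |(d/dt)[ρ(ν(t))ν'(t)]|·ν(t))·‖f'‖_{L_∞(0,∞)}.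 -/
open MeasureTheory Set Filter ENNReal

open scoped NNReal Topology

/-!
With `φ = (ρ ∘ ν) ν'`, take `g' = (f ∘ ν)' φ + (f ∘ ν) φ'`. As a primitive of an `L∞` function,
`f` is `‖f'‖∞`-Lipschitz on `[0, ∞)`, so `|(f ∘ ν)'| ≤ ‖f'‖∞ |ν'|` (also where `f ∘ ν` is not
differentiable and `deriv` is `0`) and `|f ∘ ν| ≤ ‖f'‖∞ ν`; this bounds `|g'|` by the two suprema.
On `[r, t]` with `r > 0` both factors are Lipschitz (`|φ'| ≤ S₂ / ν r` there), so integration by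
parts for absolutely continuous functions gives `g t - g r = ∫ᵣᵗ g'`, and `r → 0` removes the
possible singularity of `φ'` at `0`.
-/

theorem lipschitzOnWith_Ici_of_eq_intervalIntegral {f f' : ℝ → ℝ} {a : ℝ}
    (hint : ∀ x, a < x → IntervalIntegrable f' volume a x)
    (hrepr : ∀ x, a ≤ x → f x = ∫ s in a..x, f' s)
    (hf' : eLpNorm f' ⊤ (volume.restrict (Ioi a)) ≠ ⊤) :
    LipschitzOnWith (eLpNorm f' ⊤ (volume.restrict (Ioi a))).toNNReal f (Ici a) := by
  set K := (eLpNorm f' ⊤ (volume.restrict (Ioi a))).toNNReal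
  have hbound : ∀ᵐ z, z ∈ Ioi a → ‖f' z‖ ≤ K := by
    rw [← ae_restrict_iff' measurableSet_Ioi]
    filter_upwards [ae_le_eLpNormEssSup (f := f') (μ := volume.restrict (Ioi a))] with z hz
    rw [← eLpNorm_exponent_top] at hz
    simpa [K, ENNReal.coe_toNNReal_eq_toReal] using ENNReal.toReal_mono hf' hz
  have hint' : ∀ x ∈ Ici a, IntervalIntegrable f' volume a x := fun x hx =>
    hx.eq_or_lt.elim (fun h => by rw [← h]) (hint x)
  refine LipschitzOnWith.of_dist_le_mul fun x hx y hy => ?_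
  rw [Real.dist_eq, Real.dist_eq, hrepr x hx, hrepr y hy,
    intervalIntegral.integral_interval_sub_left (hint' x hx) (hint' y hy), ← Real.norm_eq_abs]
  refine intervalIntegral.norm_integral_le_of_norm_le_const_ae ?_
  filter_upwards [hbound] with z hz hzI
  exact hz (lt_of_le_of_lt (le_min hy hx) hzI.1)

theorem abs_deriv_comp_le_of_lipschitzOnWith {f ν : ℝ → ℝ} {K : ℝ≥0} {s : Set ℝ} {x d : ℝ}
    (hf : LipschitzOnWith K f s) (hν : HasDerivAt ν d x) (hνs : ∀ᶠ y in 𝓝 x, ν y ∈ s) :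
    |deriv (fun y => f (ν y)) x| ≤ K * |d| := by
  by_cases hd : DifferentiableAt ℝ (fun y => f (ν y)) x
  · refine le_of_tendsto_of_tendsto (hasDerivAt_iff_tendsto_slope.1 hd.hasDerivAt).abs
      ((hasDerivAt_iff_tendsto_slope.1 hν).abs.const_mul (K : ℝ)) ?_
    filter_upwards [nhdsWithin_le_nhds hνs] with y hy
    simp only [slope_def_field, abs_div, ← mul_div_assoc]
    gcongr
    simpa [Real.dist_eq, abs_sub_comm] using hf.dist_le_mul (ν y) hy (ν x) hνs.self_of_nhds
  · rw [deriv_zero_of_not_differentiableAt hd, abs_zero]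
    positivity

theorem integral_deriv_mul_eq_sub_of_absolutelyContinuousOnInterval_Ioc {u v : ℝ → ℝ} {a b : ℝ}
    (hab : a < b) (hu : ∀ r ∈ Ioc a b, AbsolutelyContinuousOnInterval u r b)
    (hv : ∀ r ∈ Ioc a b, AbsolutelyContinuousOnInterval v r b)
    (hcont : ContinuousWithinAt (fun x => u x * v x) (Ioi a) a)
    (hint : IntervalIntegrable (fun x => deriv u x * v x + u x * deriv v x) volume a b) :
    ∫ x in a..b, deriv u x * v x + u x * deriv v x = u b * v b - u a * v a := by
  have hprim : Tendsto (fun r => ∫ x in r..b, deriv u x * v x + u x * deriv v x) (𝓝[>] a)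
      (𝓝 (∫ x in a..b, deriv u x * v x + u x * deriv v x)) := by
    have hcont := intervalIntegral.continuousOn_primitive_interval_left
      (uIcc_of_le hab.le ▸ (intervalIntegrable_iff_integrableOn_Icc_of_le hab.le).1 hint)
    exact ((hcont a left_mem_uIcc).mono_of_mem_nhdsWithin
      (uIcc_of_le hab.le ▸ Icc_mem_nhdsGT hab)).tendsto
  refine tendsto_nhds_unique (hprim.congr' ?_) (tendsto_const_nhds.sub hcont)
  filter_upwards [Ioc_mem_nhdsGT hab] with r hr
  exact (hu r hr).integral_deriv_mul_eq_sub (hv r hr)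

theorem exists_lipschitzOnWith_Icc_of_hasDerivAt {f f' : ℝ → ℝ} {a b : ℝ}
    (hf : ∀ x ∈ Icc a b, HasDerivAt f (f' x) x) (hf' : ContinuousOn f' (Icc a b)) :
    ∃ K, LipschitzOnWith K f (Icc a b) := by
  obtain ⟨C, hC⟩ := isCompact_Icc.exists_bound_of_continuousOn hf'
  exact ⟨C.toNNReal, (convex_Icc a b).lipschitzOnWith_of_nnnorm_hasDerivWithin_le
    (fun x hx => (hf x hx).hasDerivWithinAt) fun x hx => by
      rw [← NNReal.coe_le_coe, coe_nnnorm]; exact (hC x hx).trans (le_max_left _ _)⟩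

section CompMul

variable {f ν ν' φ φ' : ℝ → ℝ} {K : ℝ≥0}

theorem abs_deriv_comp_mul_add_le (hf : LipschitzOnWith K f (Ici 0)) (hf0 : f 0 = 0)
    {s d e : ℝ} (hν : HasDerivAt ν d s) (hν_nonneg : ∀ᶠ y in 𝓝 s, 0 ≤ ν y)
    (hφ : HasDerivAt φ e s) :
    |deriv (fun x => f (ν x)) s * φ s + f (ν s) * deriv φ s| ≤
      K * (|d| * |φ s| + |e| * ν s) := by
  have hfν : |f (ν s)| ≤ K * ν s := by
    simpa [hf0, Real.dist_eq, abs_of_nonneg hν_nonneg.self_of_nhds] using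
      hf.dist_le_mul (ν s) hν_nonneg.self_of_nhds 0 self_mem_Ici
  calc _ ≤ |deriv (fun x => f (ν x)) s| * |φ s| + |f (ν s)| * |e| := by
        rw [hφ.deriv, ← abs_mul, ← abs_mul]; exact abs_add_le _ _
    _ ≤ K * |d| * |φ s| + K * ν s * |e| := by
        gcongr
        exact abs_deriv_comp_le_of_lipschitzOnWith hf hν hν_nonneg
    _ = _ := by ring

theorem aestronglyMeasurable_deriv_comp_mul_add {s : Set ℝ}
    (hs : MeasurableSet s) (hf : ContinuousOn f (Ici 0)) (hν : ContinuousOn ν s)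
    (hν_maps : MapsTo ν s (Ici 0)) (hφ : ContinuousOn φ s) :
    AEStronglyMeasurable (fun x => deriv (fun y => f (ν y)) x * φ x + f (ν x) * deriv φ x)
      (volume.restrict s) :=
  ((measurable_deriv _).aestronglyMeasurable.mul (hφ.aestronglyMeasurable hs)).add
    (((hf.comp hν hν_maps).aestronglyMeasurable hs).mul (measurable_deriv _).aestronglyMeasurable)

theorem integral_deriv_comp_mul_add_eq_sub {C t : ℝ} (ht : t ∈ Ioo (0:ℝ) 1)
    (hf : LipschitzOnWith K f (Ici 0)) (hν0 : ν 0 = 0) (hν_mono : StrictMonoOn ν (Ico 0 1))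
    (hν_maps : MapsTo ν (Ico 0 1) (Ici 0)) (hν : ∀ s ∈ Ico (0:ℝ) 1, HasDerivAt ν (ν' s) s)
    (hν' : ContinuousOn ν' (Ico 0 1)) (hφ : ∀ s ∈ Ico (0:ℝ) 1, HasDerivAt φ (φ' s) s)
    (hφ' : ∀ s ∈ Ico (0:ℝ) 1, |φ' s| * ν s ≤ C)
    (hint : IntervalIntegrable (fun s => deriv (fun x => f (ν x)) s * φ s + f (ν s) * deriv φ s)
      volume 0 t) :
    ∫ s in (0:ℝ)..t, deriv (fun x => f (ν x)) s * φ s + f (ν s) * deriv φ s =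
      f (ν t) * φ t - f (ν 0) * φ 0 := by
  have hIcc : Icc 0 t ⊆ Ico (0:ℝ) 1 := Icc_subset_Ico_right ht.2
  obtain ⟨Kν, hν_lip⟩ := exists_lipschitzOnWith_Icc_of_hasDerivAt (fun s hs => hν s (hIcc hs))
    (hν'.mono hIcc)
  have hfν_lip : LipschitzOnWith (K * Kν) (fun x => f (ν x)) (Icc 0 t) :=
    hf.comp hν_lip (hν_maps.mono_left hIcc)
  have hφ_lip : ∀ r ∈ Ioc 0 t, LipschitzOnWith (C / ν r).toNNReal φ (Icc r t) := by
    intro r hr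
    have hr1 : r ∈ Ico (0:ℝ) 1 := hIcc ⟨hr.1.le, hr.2⟩
    have hνr : 0 < ν r := hν0 ▸ hν_mono ⟨le_rfl, one_pos⟩ hr1 hr.1
    refine (convex_Icc r t).lipschitzOnWith_of_nnnorm_hasDerivWithin_le
      (fun s hs => (hφ s (hIcc ⟨hr.1.le.trans hs.1, hs.2⟩)).hasDerivWithinAt) fun s hs => ?_
    have hs1 : s ∈ Ico (0:ℝ) 1 := hIcc ⟨hr.1.le.trans hs.1, hs.2⟩
    rw [← NNReal.coe_le_coe, coe_nnnorm, Real.norm_eq_abs, Real.coe_toNNReal', le_max_iff,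
      le_div_iff₀ hνr]
    left
    calc |φ' s| * ν r ≤ |φ' s| * ν s := by
          gcongr; exact hν_mono.monotoneOn hr1 hs1 hs.1
      _ ≤ C := hφ' s hs1
  refine integral_deriv_mul_eq_sub_of_absolutelyContinuousOnInterval_Ioc ht.1
    (fun r hr => ?_) (fun r hr => ?_) ?_ hint
  · refine (hfν_lip.mono ?_).absolutelyContinuousOnInterval
    rw [uIcc_of_le hr.2]; exact Icc_subset_Icc_left hr.1.le
  · exact (uIcc_of_le hr.2 ▸ hφ_lip r hr).absolutelyContinuousOnInterval
  · refine ContinuousWithinAt.mono_of_mem_nhdsWithin ?_ (Icc_mem_nhdsGT ht.1)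
    exact (hfν_lip.continuousOn 0 ⟨le_rfl, ht.1.le⟩).mul
      (hφ 0 ⟨le_rfl, one_pos⟩).continuousAt.continuousWithinAt

end CompMul

section DensityTransform

variable {f ρ ρ' ν ν' ν'' : ℝ → ℝ} {K : ℝ≥0}

theorem hasDerivAt_comp_mul_deriv {s : ℝ} (hρ : HasDerivAt ρ (ρ' (ν s)) (ν s))
    (hν : HasDerivAt ν (ν' s) s) (hν' : HasDerivAt ν' (ν'' s) s) :
    HasDerivAt (fun x => ρ (ν x) * ν' x) (ρ' (ν s) * ν' s ^ 2 + ρ (ν s) * ν'' s) s :=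
  ((hρ.comp s hν).mul hν').congr_deriv (by simp only [Function.comp_apply]; ring)

theorem enorm_deriv_comp_mul_add_le (hf : LipschitzOnWith K f (Ici 0)) (hf0 : f 0 = 0)
    (hρ_pos : ∀ x, 0 ≤ x → 0 < ρ x) (hρ_deriv : ∀ x, 0 ≤ x → HasDerivAt ρ (ρ' x) x)
    (hν_maps : MapsTo ν (Ico 0 1) (Ici 0)) (hν_deriv : ∀ t ∈ Ico (0:ℝ) 1, HasDerivAt ν (ν' t) t)
    (hν_deriv2 : ∀ t ∈ Ico (0:ℝ) 1, HasDerivAt ν' (ν'' t) t) {s : ℝ} (hs : s ∈ Ioo (0:ℝ) 1) :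
    ‖deriv (fun x => f (ν x)) s * (ρ (ν s) * ν' s) +
        f (ν s) * deriv (fun x => ρ (ν x) * ν' x) s‖ₑ ≤
      K * (ENNReal.ofReal (ρ (ν s) * ν' s ^ 2) +
        ENNReal.ofReal (|ρ' (ν s) * ν' s ^ 2 + ρ (ν s) * ν'' s| * ν s)) := by
  have hs' : s ∈ Ico (0:ℝ) 1 := Ioo_subset_Ico_self hs
  have hρν := hρ_pos _ (hν_maps hs')
  have h := abs_deriv_comp_mul_add_le hf hf0 (hν_deriv s hs')
    (eventually_of_mem (Ioo_mem_nhds hs.1 hs.2) fun y hy => hν_maps (Ioo_subset_Ico_self hy))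
    (hasDerivAt_comp_mul_deriv (hρ_deriv _ (hν_maps hs')) (hν_deriv s hs') (hν_deriv2 s hs'))
  rw [show |ν' s| * |ρ (ν s) * ν' s| = ρ (ν s) * ν' s ^ 2 by
    rw [abs_mul, abs_of_pos hρν, ← sq_abs (ν' s)]; ring] at h
  rw [← ofReal_norm, ← ENNReal.ofReal_coe_nnreal, ← ENNReal.ofReal_add
    (mul_nonneg hρν.le (sq_nonneg _)) (mul_nonneg (abs_nonneg _) (hν_maps hs')),
    ← ENNReal.ofReal_mul NNReal.zero_le_coe]
  exact ENNReal.ofReal_le_ofReal h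

theorem eLpNorm_top_deriv_comp_mul_add_le (hf : LipschitzOnWith K f (Ici 0)) (hf0 : f 0 = 0)
    (hρ_pos : ∀ x, 0 ≤ x → 0 < ρ x) (hρ_deriv : ∀ x, 0 ≤ x → HasDerivAt ρ (ρ' x) x)
    (hν_maps : MapsTo ν (Ico 0 1) (Ici 0)) (hν_deriv : ∀ t ∈ Ico (0:ℝ) 1, HasDerivAt ν (ν' t) t)
    (hν_deriv2 : ∀ t ∈ Ico (0:ℝ) 1, HasDerivAt ν' (ν'' t) t) :
    eLpNorm (fun s => deriv (fun x => f (ν x)) s * (ρ (ν s) * ν' s) +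
        f (ν s) * deriv (fun x => ρ (ν x) * ν' x) s) ⊤ (volume.restrict (Ioo (0:ℝ) 1)) ≤
      ((⨆ t ∈ Ico (0:ℝ) 1, ENNReal.ofReal (ρ (ν t) * ν' t ^ 2)) +
        ⨆ t ∈ Ico (0:ℝ) 1, ENNReal.ofReal (|ρ' (ν t) * ν' t ^ 2 + ρ (ν t) * ν'' t| * ν t)) * K := by
  rw [eLpNorm_exponent_top, mul_comm]
  refine eLpNormEssSup_le_of_ae_enorm_bound
    (ae_restrict_of_forall_mem measurableSet_Ioo fun s hs => ?_)
  refine (enorm_deriv_comp_mul_add_le hf hf0 hρ_pos hρ_deriv hν_maps hν_deriv hν_deriv2 hs).trans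
    (mul_le_mul_right (add_le_add ?_ ?_) _)
  · exact le_biSup (fun t => ENNReal.ofReal (ρ (ν t) * ν' t ^ 2)) (Ioo_subset_Ico_self hs)
  · exact le_biSup (fun t => ENNReal.ofReal (|ρ' (ν t) * ν' t ^ 2 + ρ (ν t) * ν'' t| * ν t))
      (Ioo_subset_Ico_self hs)

end DensityTransform

theorem transformed_integrand_in_W1infty_general
    (ρ ρ' : ℝ → ℝ) (hρ_pos : ∀ x, 0 ≤ x → 0 < ρ x)
    (hρ_deriv : ∀ x, 0 ≤ x → HasDerivAt ρ (ρ' x) x)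
    (ν ν' ν'' : ℝ → ℝ)
    (hν0 : ν 0 = 0)
    (hν_mono : StrictMonoOn ν (Ico 0 1))
    (hν_maps : MapsTo ν (Ico (0:ℝ) 1) (Ici 0))
    (hν_deriv : ∀ t ∈ Ico (0:ℝ) 1, HasDerivAt ν (ν' t) t)
    (hν_deriv2 : ∀ t ∈ Ico (0:ℝ) 1, HasDerivAt ν' (ν'' t) t)
    (S₁ S₂ : ℝ≥0∞)
    (hS₁ : S₁ = ⨆ t ∈ Ico (0:ℝ) 1, ENNReal.ofReal (ρ (ν t) * ν' t ^ 2))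
    (hS₂ : S₂ = ⨆ t ∈ Ico (0:ℝ) 1,
        ENNReal.ofReal (|ρ' (ν t) * ν' t ^ 2 + ρ (ν t) * ν'' t| * ν t))
    (hS₁_fin : S₁ < ⊤) (hS₂_fin : S₂ < ⊤)
    (f f' : ℝ → ℝ)
    (hf0 : f 0 = 0)
    (hf_int : ∀ x, 0 < x → IntervalIntegrable f' volume 0 x)
    (hf_repr : ∀ x, 0 ≤ x → f x = ∫ s in (0:ℝ)..x, f' s)
    (hf'Linf : MemLp f' ⊤ (volume.restrict (Ioi 0)))
    (g : ℝ → ℝ) (hg : ∀ t, g t = f (ν t) * ρ (ν t) * ν' t) :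
    g 0 = 0 ∧
    ∃ g' : ℝ → ℝ,
      (∀ t ∈ Ico (0:ℝ) 1, IntervalIntegrable g' volume 0 t ∧
        g t = ∫ s in (0:ℝ)..t, g' s) ∧
      eLpNorm g' ⊤ (volume.restrict (Ioo (0:ℝ) 1)) ≤
        (S₁ + S₂) * eLpNorm f' ⊤ (volume.restrict (Ioi 0)) ∧
      eLpNorm g' ⊤ (volume.restrict (Ioo (0:ℝ) 1)) < ⊤ := by
  have hg0 : g 0 = 0 := by rw [hg, hν0, hf0, zero_mul, zero_mul]
  set L := eLpNorm f' ⊤ (volume.restrict (Ioi 0))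
  have hL : L ≠ ⊤ := hf'Linf.eLpNorm_ne_top
  have hf_lip := lipschitzOnWith_Ici_of_eq_intervalIntegral hf_int hf_repr hL
  have hφ (s) (hs : s ∈ Ico (0:ℝ) 1) := hasDerivAt_comp_mul_deriv
    (hρ_deriv _ (hν_maps hs)) (hν_deriv s hs) (hν_deriv2 s hs)
  set G := fun s =>
    deriv (fun x => f (ν x)) s * (ρ (ν s) * ν' s) + f (ν s) * deriv (fun x => ρ (ν x) * ν' x) s
  have hbound : eLpNorm G ⊤ (volume.restrict (Ioo 0 1)) ≤ (S₁ + S₂) * L := by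
    rw [hS₁, hS₂, ← coe_toNNReal hL]
    exact eLpNorm_top_deriv_comp_mul_add_le hf_lip hf0 hρ_pos hρ_deriv hν_maps hν_deriv hν_deriv2
  have hfin : (S₁ + S₂) * L < ⊤ := mul_lt_top (add_lt_top.2 ⟨hS₁_fin, hS₂_fin⟩) hL.lt_top
  have hG_int : IntegrableOn G (Ioo 0 1) := by
    refine MemLp.integrable le_top ⟨?_, hbound.trans_lt hfin⟩
    refine aestronglyMeasurable_deriv_comp_mul_add measurableSet_Ioo hf_lip.continuousOn
      (fun s hs => ?_) (hν_maps.mono_left Ioo_subset_Ico_self) fun s hs => ?_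
    · exact (hν_deriv s (Ioo_subset_Ico_self hs)).continuousAt.continuousWithinAt
    · exact (hφ s (Ioo_subset_Ico_self hs)).continuousAt.continuousWithinAt
  refine ⟨hg0, G, fun t ht => ?_, hbound, hbound.trans_lt hfin⟩
  have hGt : IntervalIntegrable G volume 0 t := (intervalIntegrable_iff_integrableOn_Ioc_of_le
    ht.1).2 (hG_int.mono_set (Ioc_subset_Ioo_right ht.2))
  refine ⟨hGt, ?_⟩
  rcases ht.1.eq_or_lt with rfl | ht0
  · rw [intervalIntegral.integral_same, hg0]
  have hDφ (s) (hs : s ∈ Ico (0:ℝ) 1) :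
      |ρ' (ν s) * ν' s ^ 2 + ρ (ν s) * ν'' s| * ν s ≤ S₂.toReal :=
    (ENNReal.ofReal_le_iff_le_toReal hS₂_fin.ne).1 (hS₂ ▸ le_biSup (fun t => ENNReal.ofReal
        (|ρ' (ν t) * ν' t ^ 2 + ρ (ν t) * ν'' t| * ν t)) hs)
  rw [integral_deriv_comp_mul_add_eq_sub ⟨ht0, ht.2⟩ hf_lip hν0 hν_mono hν_maps hν_deriv
    (fun s hs => (hν_deriv2 s hs).continuousAt.continuousWithinAt) hφ hDφ hGt, hg, hν0, hf0]
  ring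

/-- **Theorem 2(ii), `p = ∞`.** Let `ρ` be a differentiable positive
probability density on `[0,∞)` and `ν : [0,1) → [0,∞)` an increasing twice differentiable
bijection with `ν(0) = 0` and `ν(t) → ∞` as `t → 1⁻`.  If
`sup_{t∈[0,1)} ρ(ν(t)) (ν'(t))² < ∞` and `sup_{t∈[0,1)} |(d/dt)[ρ(ν(t)) ν'(t)]| ν(t) < ∞`
(the derivative being `ρ'(ν(t)) ν'(t)² + ρ(ν(t)) ν''(t)`), then for every
`f ∈ F_{1,∞}(ℝ₊)` the function `g_{f,ν}(t) = f(ν(t)) ρ(ν(t)) ν'(t)` belongs to `W_{1,∞}`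
with `ess sup_{t∈(0,1)} |g_{f,ν}'(t)|` bounded by the sum of the two suprema times
`‖f'‖_{L_∞(0,∞)}`. -/
theorem transformed_integrand_in_W1infty
    (ρ ρ' : ℝ → ℝ) (hρ_pos : ∀ x, 0 ≤ x → 0 < ρ x)
    (hρ_deriv : ∀ x, 0 ≤ x → HasDerivAt ρ (ρ' x) x)
    (hρ_int : IntegrableOn ρ (Ioi 0))
    (hρ_prob : ∫ x in Ioi (0:ℝ), ρ x = 1)
    (ν ν' ν'' : ℝ → ℝ)
    (hν0 : ν 0 = 0)
    (hν_mono : StrictMonoOn ν (Ico 0 1))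
    (hν_maps : MapsTo ν (Ico (0:ℝ) 1) (Ici 0))
    (hν_surj : SurjOn ν (Ico (0:ℝ) 1) (Ici 0))
    (hν_deriv : ∀ t ∈ Ico (0:ℝ) 1, HasDerivAt ν (ν' t) t)
    (hν_deriv2 : ∀ t ∈ Ico (0:ℝ) 1, HasDerivAt ν' (ν'' t) t)
    (hν_tendsto : Tendsto ν (nhdsWithin 1 (Iio 1)) atTop)
    (S₁ S₂ : ℝ≥0∞)
    (hS₁ : S₁ = ⨆ t ∈ Ico (0:ℝ) 1, ENNReal.ofReal (ρ (ν t) * ν' t ^ 2))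
    (hS₂ : S₂ = ⨆ t ∈ Ico (0:ℝ) 1,
        ENNReal.ofReal (|ρ' (ν t) * ν' t ^ 2 + ρ (ν t) * ν'' t| * ν t))
    (hS₁_fin : S₁ < ⊤) (hS₂_fin : S₂ < ⊤)
    (f f' : ℝ → ℝ)
    (hf0 : f 0 = 0)
    (hf_int : ∀ x, 0 < x → IntervalIntegrable f' volume 0 x)
    (hf_repr : ∀ x, 0 ≤ x → f x = ∫ s in (0:ℝ)..x, f' s)
    (hf'Linf : MemLp f' ⊤ (volume.restrict (Ioi 0)))
    (g : ℝ → ℝ) (hg : ∀ t, g t = f (ν t) * ρ (ν t) * ν' t) :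
    g 0 = 0 ∧
    ∃ g' : ℝ → ℝ,
      (∀ t ∈ Ico (0:ℝ) 1, IntervalIntegrable g' volume 0 t ∧
        g t = ∫ s in (0:ℝ)..t, g' s) ∧
      eLpNorm g' ⊤ (volume.restrict (Ioo (0:ℝ) 1)) ≤
        (S₁ + S₂) * eLpNorm f' ⊤ (volume.restrict (Ioi 0)) ∧
      eLpNorm g' ⊤ (volume.restrict (Ioo (0:ℝ) 1)) < ⊤ :=
  transformed_integrand_in_W1infty_general ρ ρ' hρ_pos hρ_deriv ν ν' ν'' hν0 hν_mono hν_maps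
    hν_deriv hν_deriv2 S₁ S₂ hS₁ hS₂ hS₁_fin hS₂_fin f f' hf0 hf_int hf_repr hf'Linf g hg
end

section
/- Let p∈(1,∞], let ρ:ℝ→(0,∞) be a differentiable even probability density (ρ(-x)=ρ(x)), and let ν:(-1/2,1/2)→ℝ be an odd (ν(-t)=-ν(t)), increasing, twice differentiable bijection with ν(0)=0 and ν(t)→±∞ as t→±1/2. If ‖h_{1,p*}‖_{L_∞(-1/2,1/2)}<∞ and ‖h_{2,p*}‖_{L_p(-1/2,1/2)}<∞, then for every f∈F_{1,p}(ℝ) the function g_{f,ν} belongs to W_{1,p}((-1/2,1/2)) and ‖g_{f,ν}'‖_{L_p(-1/2,1/2)} ≤ (‖h_{1,p*}‖_{L_∞(-1/2,1/2)} + ‖h_{2,p*}‖_{L_p(-1/2,1/2)})·‖f'‖_{L_p(ℝ)}. -/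
open MeasureTheory Set Filter ENNReal

/-!
Write `g = (f ∘ ν) · G` with `G = (ρ ∘ ν) ν'`, whose derivative is
`D = ρ'(ν) ν'² + ρ(ν) ν''`, so that `h₂ = D |ν|^q`. By change of variables `f ∘ ν` is a primitive
of `(f' ∘ ν) ν'`, so the candidate derivative is `g' = (f' ∘ ν) ν' G + (f ∘ ν) D`. The function
`D` need not be integrable near `0`, but it is on every interval avoiding `0`, where `|ν|^q` is
bounded below; there the product rule for absolutely continuous functions gives `g = ∫ g'` up to a
constant. Hölder's inequality gives `|f x| ≤ ‖f'‖_p |x|^q`, hence `|(f ∘ ν) D| ≤ ‖f'‖_p |h₂|`,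
so `g'` is integrable up to `0` and the identity extends to intervals ending at `0` by continuity.
For the norm bound, `(f' ∘ ν) ν' G = h₁ · ν'^{1/p} (f' ∘ ν)`, and `ν'^{1/p} (f' ∘ ν)` has the
`L_p` norm of `f'` restricted to `ν(-1/2, 1/2)`, because `ν` pushes `ν' dt` forward to Lebesgue
measure.
-/

theorem ENNReal.toReal_one_div_le_one {p : ℝ≥0∞} (hp : 1 ≤ p) : (1 / p).toReal ≤ 1 :=
  toReal_le_of_le_ofReal zero_le_one (by rw [ofReal_one, one_div]; exact ENNReal.inv_le_one.2 hp)

theorem MeasureTheory.MemLp.intervalIntegrable {f : ℝ → ℝ} {p : ℝ≥0∞} (hf : MemLp f p volume)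
    (hp : 1 ≤ p) (a b : ℝ) : IntervalIntegrable f volume a b :=
  ((hf.locallyIntegrable hp).integrableOn_isCompact isCompact_uIcc).intervalIntegrable

theorem abs_intervalIntegral_le_eLpNorm_mul_rpow {f : ℝ → ℝ} {p : ℝ≥0∞} (hp : 1 ≤ p)
    (hf : MemLp f p volume) (a b : ℝ) :
    |∫ x in a..b, f x| ≤ (eLpNorm f p volume).toReal * |b - a| ^ (1 - (1 / p).toReal) := by
  have hexp : 1 / (1 : ℝ≥0∞).toReal - 1 / p.toReal = 1 - (1 / p).toReal := by
    simp [toReal_inv]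
  have key : ‖∫ x in a..b, f x‖ₑ ≤
      eLpNorm f p volume * ENNReal.ofReal |b - a| ^ (1 - (1 / p).toReal) :=
    calc ‖∫ x in a..b, f x‖ₑ = ‖∫ x in uIoc a b, f x‖ₑ := by
          rw [← ofReal_norm, ← ofReal_norm, intervalIntegral.norm_integral_eq_norm_integral_uIoc]
      _ ≤ eLpNorm f 1 (volume.restrict (uIoc a b)) := by
          rw [eLpNorm_one_eq_lintegral_enorm]; exact enorm_integral_le_lintegral_enorm _
      _ ≤ eLpNorm f p (volume.restrict (uIoc a b)) * volume.restrict (uIoc a b) univ ^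
            (1 / (1 : ℝ≥0∞).toReal - 1 / p.toReal) :=
          eLpNorm_le_eLpNorm_mul_rpow_measure_univ hp hf.1.restrict
      _ ≤ eLpNorm f p volume * ENNReal.ofReal |b - a| ^ (1 - (1 / p).toReal) := by
          rw [Measure.restrict_apply_univ, Real.volume_uIoc, hexp]
          gcongr
          exact Measure.restrict_le_self
  have hfin : eLpNorm f p volume * ENNReal.ofReal |b - a| ^ (1 - (1 / p).toReal) ≠ ⊤ :=
    mul_ne_top hf.eLpNorm_ne_top
      (rpow_ne_top_of_nonneg (sub_nonneg.2 (toReal_one_div_le_one hp)) ofReal_ne_top)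
  have := toReal_mono hfin key
  rwa [toReal_mul, ← toReal_rpow, toReal_ofReal (abs_nonneg _), toReal_enorm,
    Real.norm_eq_abs] at this

theorem exists_measurable_ae_eq_integral_eq_sub {f f' : ℝ → ℝ} {p : ℝ≥0∞} (hp : 1 ≤ p)
    (hf' : MemLp f' p volume) (hf : ∀ x, f x = ∫ s in (0:ℝ)..x, f' s) :
    ∃ φ : ℝ → ℝ, Measurable φ ∧ f' =ᵐ[volume] φ ∧ ∀ x y, ∫ s in x..y, φ s = f y - f x := by
  obtain ⟨φ, hφ, hf'φ⟩ := hf'.1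
  refine ⟨φ, hφ.measurable, hf'φ, fun x y => ?_⟩
  rw [hf, hf, intervalIntegral.integral_interval_sub_left (hf'.intervalIntegrable hp 0 y)
    (hf'.intervalIntegrable hp 0 x)]
  exact intervalIntegral.integral_congr_ae (hf'φ.mono fun s hs _ => hs.symm)

theorem continuous_of_forall_integral_eq_sub {f φ : ℝ → ℝ}
    (hφ : ∀ x y, IntervalIntegrable φ volume x y) (hf : ∀ x y, ∫ s in x..y, φ s = f y - f x) :
    Continuous f := by
  have : f = fun y => f 0 + ∫ s in 0..y, φ s := funext fun y => by rw [hf]; ring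
  rw [this]
  exact continuous_const.add (intervalIntegral.continuous_primitive hφ 0)

theorem MonotoneOn.nonneg_of_hasDerivAt {J : Set ℝ} {ν : ℝ → ℝ} {d t : ℝ}
    (hν : MonotoneOn ν J) (hJ : IsOpen J) (ht : t ∈ J) (h : HasDerivAt ν d t) : 0 ≤ d :=
  h.hasDerivWithinAt.derivWithin (hJ.uniqueDiffWithinAt ht) ▸ hν.derivWithin_nonneg

theorem aestronglyMeasurable_restrict_of_hasDerivAt {J : Set ℝ} (hJ : MeasurableSet J)
    {G D : ℝ → ℝ} (hG : ∀ s ∈ J, HasDerivAt G (D s) s) :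
    AEStronglyMeasurable D (volume.restrict J) :=
  (stronglyMeasurable_deriv G).aestronglyMeasurable.congr
    ((ae_restrict_iff' hJ).2 (ae_of_all _ fun s hs => (hG s hs).deriv))

theorem IntervalIntegrable.of_mul_continuousOn {D w : ℝ → ℝ} {r t : ℝ}
    (h : IntervalIntegrable (fun s => D s * w s) volume r t) (hw : ContinuousOn w (uIcc r t))
    (hw0 : ∀ s ∈ uIcc r t, w s ≠ 0) : IntervalIntegrable D volume r t :=
  (h.mul_continuousOn (hw.inv₀ hw0)).congr fun s hs => by
    simp [mul_assoc, mul_inv_cancel₀ (hw0 s (uIoc_subset_uIcc hs))]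

theorem intervalIntegral.integral_deriv_mul_eq_sub_of_primitive {u v u' v' : ℝ → ℝ} {a b : ℝ}
    (hu' : IntervalIntegrable u' volume a b) (hv' : IntervalIntegrable v' volume a b)
    (hu : ∀ x ∈ uIcc a b, u x = u a + ∫ t in a..x, u' t)
    (hv : ∀ x ∈ uIcc a b, v x = v a + ∫ t in a..x, v' t) :
    ∫ x in a..b, (u' x * v x + u x * v' x) = u b * v b - u a * v a := by
  set U := fun x => u a + ∫ t in a..x, u' t
  set V := fun x => v a + ∫ t in a..x, v' t
  have hU : AbsolutelyContinuousOnInterval U a b :=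
    contDiffOn_const.absolutelyContinuousOnInterval.add
      (hu'.absolutelyContinuousOnInterval_intervalIntegral left_mem_uIcc)
  have hV : AbsolutelyContinuousOnInterval V a b :=
    contDiffOn_const.absolutelyContinuousOnInterval.add
      (hv'.absolutelyContinuousOnInterval_intervalIntegral left_mem_uIcc)
  rw [hu b right_mem_uIcc, hv b right_mem_uIcc]
  convert hU.integral_deriv_mul_eq_sub hV using 1
  · refine intervalIntegral.integral_congr_ae ?_
    filter_upwards [hu'.ae_hasDerivAt_integral, hv'.ae_hasDerivAt_integral] with x hxu hxv hx
    have hx' := uIoc_subset_uIcc hx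
    rw [((hxu hx' a left_mem_uIcc).const_add (u a)).deriv,
      ((hxv hx' a left_mem_uIcc).const_add (v a)).deriv, hu x hx', hv x hx']
  · simp [U, V]

theorem intervalIntegral.integral_eq_sub_of_forall_mem_Ioo {F φ : ℝ → ℝ} {a b : ℝ}
    (hF : ContinuousOn F (uIcc a b)) (hφ : IntervalIntegrable φ volume a b)
    (h : ∀ r ∈ Ioo (min a b) (max a b), ∫ x in r..b, φ x = F b - F r) :
    ∫ x in a..b, φ x = F b - F a := by
  rcases eq_or_ne a b with rfl | hab
  · simp
  refine EqOn.of_subset_closure h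
    (continuousOn_primitive_interval_left ((intervalIntegrable_iff' (f := φ)).1 hφ))
    (continuousOn_const.sub hF) Ioo_subset_Icc_self ?_ left_mem_uIcc
  rw [closure_Ioo (min_lt_max.2 hab).ne]
  rfl

section ChangeOfVariables

variable {J : Set ℝ} {ν ν' φ : ℝ → ℝ} {r t : ℝ}

theorem integral_comp_mul_deriv_of_nonneg_on (hJ : J.OrdConnected)
    (hν : ∀ s ∈ J, HasDerivAt ν (ν' s) s) (hν' : ∀ s ∈ J, 0 ≤ ν' s) (hr : r ∈ J) (ht : t ∈ J) :
    ∫ s in r..t, φ (ν s) * ν' s = ∫ x in ν r..ν t, φ x :=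
  intervalIntegral.integral_comp_mul_deriv_of_deriv_nonneg
    (fun s hs => (hν s (hJ.uIcc_subset hr ht hs)).continuousAt.continuousWithinAt)
    (fun s hs => hν s (hJ.uIcc_subset hr ht (Ioo_subset_Icc_self hs)))
    (fun s hs => hν' s (hJ.uIcc_subset hr ht (Ioo_subset_Icc_self hs)))

theorem intervalIntegrable_comp_mul_deriv_of_nonneg_on (hJ : J.OrdConnected)
    (hν : ∀ s ∈ J, HasDerivAt ν (ν' s) s) (hν' : ∀ s ∈ J, 0 ≤ ν' s) (hr : r ∈ J) (ht : t ∈ J)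
    (hφ : IntervalIntegrable φ volume (ν r) (ν t)) :
    IntervalIntegrable (fun s => φ (ν s) * ν' s) volume r t :=
  (intervalIntegral.integrable_comp_mul_deriv_iff_of_deriv_nonneg
    (fun s hs => (hν s (hJ.uIcc_subset hr ht hs)).continuousAt.continuousWithinAt)
    (fun s hs => hν s (hJ.uIcc_subset hr ht (Ioo_subset_Icc_self hs)))
    (fun s hs => hν' s (hJ.uIcc_subset hr ht (Ioo_subset_Icc_self hs)))).2 hφ

theorem integral_deriv_comp_mul_eq_sub (hJ : J.OrdConnected) {f G D : ℝ → ℝ} {c : ℝ}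
    (hφ : ∀ x y, IntervalIntegrable φ volume x y) (hf : ∀ x y, ∫ s in x..y, φ s = f y - f x)
    (hν : ∀ s ∈ J, HasDerivAt ν (ν' s) s) (hν' : ∀ s ∈ J, 0 ≤ ν' s)
    (hG : ∀ s ∈ J, HasDerivAt G (D s) s)
    (hD : ∀ r ∈ J, ∀ s ∈ J, c ∉ uIcc r s → IntervalIntegrable D volume r s)
    (hc : c ∈ J) (ht : t ∈ J)
    (hint : IntervalIntegrable (fun s => φ (ν s) * ν' s * G s + f (ν s) * D s) volume c t) :
    ∫ s in c..t, (φ (ν s) * ν' s * G s + f (ν s) * D s) = f (ν t) * G t - f (ν c) * G c := by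
  have hf_cont := continuous_of_forall_integral_eq_sub hφ hf
  have hsub := hJ.uIcc_subset hc ht
  refine intervalIntegral.integral_eq_sub_of_forall_mem_Ioo (F := fun s => f (ν s) * G s)
    (fun s hs => ?_) hint fun r hr => ?_
  · exact ((hf_cont.continuousAt.comp (hν s (hsub hs)).continuousAt).mul
      (hG s (hsub hs)).continuousAt).continuousWithinAt
  have hr' : r ∈ J := hsub (Ioo_subset_Icc_self hr)
  have hcr : ∀ s ∈ uIcc r t, c ∉ uIcc r s := by
    intro s hs
    simp only [mem_Ioo, mem_uIcc, min_def, max_def] at hr hs ⊢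
    split_ifs at hr <;> grind
  refine intervalIntegral.integral_deriv_mul_eq_sub_of_primitive
    (intervalIntegrable_comp_mul_deriv_of_nonneg_on hJ hν hν' hr' ht (hφ _ _))
    (hD r hr' t ht (hcr t right_mem_uIcc)) (fun s hs => ?_) (fun s hs => ?_)
  · rw [integral_comp_mul_deriv_of_nonneg_on hJ hν hν' hr' (hJ.uIcc_subset hr' ht hs), hf]
    ring
  · rw [intervalIntegral.integral_eq_sub_of_hasDerivAt
      (fun x hx => hG x (hJ.uIcc_subset hr' ht (uIcc_subset_uIcc_left hs hx)))
      (hD r hr' s (hJ.uIcc_subset hr' ht hs) (hcr s hs))]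
    ring

end ChangeOfVariables

theorem eLpNorm_comp_withDensity_abs_deriv {s : Set ℝ} {ν ν' φ : ℝ → ℝ} (p : ℝ≥0∞)
    (hs : MeasurableSet s) (hν : ∀ x ∈ s, HasDerivWithinAt ν (ν' x) s x) (hinj : InjOn ν s)
    (hφ : AEStronglyMeasurable φ (volume.restrict (ν '' s))) :
    eLpNorm (fun x => φ (ν x)) p
        ((volume.restrict s).withDensity fun x => ENNReal.ofReal |ν' x|) =
      eLpNorm φ p (volume.restrict (ν '' s)) := by
  have hmap := map_withDensity_abs_det_fderiv_eq_addHaar volume hs.nullMeasurableSet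
    (fun x hx => (hν x hx).hasFDerivWithinAt) hinj
  simp only [ContinuousLinearMap.det_toSpanSingleton] at hmap
  have hνm : AEMeasurable ν ((volume.restrict s).withDensity fun x => ENNReal.ofReal |ν' x|) :=
    (ContinuousOn.aemeasurable (fun x hx => (hν x hx).continuousWithinAt) hs).mono_ac
      (withDensity_absolutelyContinuous _ _)
  rw [← hmap, eLpNorm_map_measure (hmap ▸ hφ) hνm]
  rfl
theorem eLpNorm_rpow_abs_mul_eq_eLpNorm_withDensity {α : Type*} [MeasurableSpace α]
    {μ : Measure α} {p : ℝ≥0∞} {w φ : α → ℝ} (hp0 : p ≠ 0) (hp : p ≠ ⊤) (hw : AEMeasurable w μ)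
    (hφ : AEStronglyMeasurable φ μ) :
    eLpNorm (fun x => |w x| ^ (1 / p).toReal * φ x) p μ =
      eLpNorm φ p (μ.withDensity fun x => ENNReal.ofReal |w x|) := by
  have hrp : (1 / p).toReal * p.toReal = 1 := by
    rw [one_div, toReal_inv, inv_mul_cancel₀ (toReal_ne_zero.2 ⟨hp0, hp⟩)]
  rw [eLpNorm_eq_lintegral_rpow_enorm_toReal hp0 hp, eLpNorm_eq_lintegral_rpow_enorm_toReal hp0 hp,
    lintegral_withDensity_eq_lintegral_mul₀ hw.abs.ennreal_ofReal (hφ.enorm.pow_const _)]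
  congr 2 with x
  rw [Pi.mul_apply, enorm_mul, ENNReal.mul_rpow_of_nonneg _ _ toReal_nonneg,
    Real.enorm_of_nonneg (by positivity), ofReal_rpow_of_nonneg (by positivity) toReal_nonneg,
    ← Real.rpow_mul (abs_nonneg _), hrp, Real.rpow_one]

theorem eLpNorm_mul_rpow_abs_mul_le {α : Type*} [MeasurableSpace α] {μ : Measure α}
    {p : ℝ≥0∞} {k w φ : α → ℝ} (hw : AEMeasurable w μ) (hφ : AEStronglyMeasurable φ μ)
    (hkw : ∀ᵐ x ∂μ, w x = 0 → k x = 0) :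
    eLpNorm (fun x => k x * |w x| ^ (1 / p).toReal * φ x) p μ ≤
      eLpNorm k ⊤ μ * eLpNorm φ p (μ.withDensity fun x => ENNReal.ofReal |w x|) := by
  rcases eq_or_ne p 0 with rfl | hp0
  · simp
  rcases eq_or_ne p ⊤ with rfl | hp
  · -- the points where `w` vanishes are null for the weighted measure, and there `k = 0`
    simp only [one_div, inv_top, toReal_zero, Real.rpow_zero, mul_one, eLpNorm_exponent_top]
    refine eLpNormEssSup_le_of_ae_enorm_bound ?_
    have hφ_bound := (ae_withDensity_iff' hw.abs.ennreal_ofReal).1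
      (ae_le_eLpNormEssSup (f := φ) (μ := μ.withDensity fun x => ENNReal.ofReal |w x|))
    filter_upwards [ae_le_eLpNormEssSup (f := k) (μ := μ), hφ_bound, hkw] with x hk hφx hkwx
    by_cases hw0 : w x = 0
    · simp [hkwx hw0]
    · rw [enorm_mul]
      exact mul_le_mul' hk (hφx (by simpa using hw0))
  calc eLpNorm (fun x => k x * |w x| ^ (1 / p).toReal * φ x) p μ
      = eLpNorm (fun x => k x * (|w x| ^ (1 / p).toReal * φ x)) p μ := by simp only [mul_assoc]
    _ ≤ eLpNorm k ⊤ μ * eLpNorm (fun x => |w x| ^ (1 / p).toReal * φ x) p μ := by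
      simpa only [ENNReal.coe_one, one_mul] using eLpNorm_le_eLpNorm_top_mul_eLpNorm p k
        (g := fun x => |w x| ^ (1 / p).toReal * φ x)
        ((hw.abs.pow_const _).aestronglyMeasurable.mul hφ) (· * ·) 1
        (Eventually.of_forall fun x => by simp [nnnorm_mul])
    _ = eLpNorm k ⊤ μ * eLpNorm φ p (μ.withDensity fun x => ENNReal.ofReal |w x|) := by
      rw [eLpNorm_rpow_abs_mul_eq_eLpNorm_withDensity hp0 hp hw hφ]

theorem eLpNorm_comp_mul_deriv_mul_le {J : Set ℝ} (hJ : MeasurableSet J) {ν ν' k φ : ℝ → ℝ}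
    {p : ℝ≥0∞} {q : ℝ} (hp : 1 ≤ p) (hq : q = 1 - (1 / p).toReal)
    (hν : ∀ s ∈ J, HasDerivAt ν (ν' s) s) (hν' : ∀ s ∈ J, 0 ≤ ν' s) (hinj : InjOn ν J)
    (hφ : Measurable φ) :
    eLpNorm (fun s => φ (ν s) * ν' s * (k s * ν' s)) p (volume.restrict J) ≤
      eLpNorm (fun s => k s * ν' s ^ (1 + q)) ⊤ (volume.restrict J) *
        eLpNorm φ p (volume.restrict (ν '' J)) := by
  have hq1 : 1 + q ≠ 0 := by
    rw [hq]; linarith [toReal_one_div_le_one hp]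
  have hνm : AEMeasurable ν (volume.restrict J) :=
    ContinuousOn.aemeasurable (fun s hs => (hν s hs).continuousAt.continuousWithinAt) hJ
  have hfactor : ∀ s ∈ J, φ (ν s) * ν' s * (k s * ν' s) =
      k s * ν' s ^ (1 + q) * |ν' s| ^ (1 / p).toReal * φ (ν s) := by
    intro s hs
    rw [abs_of_nonneg (hν' s hs), mul_assoc (k s),
      ← Real.rpow_add' (hν' s hs) (by rw [hq]; ring_nf; norm_num),
      show 1 + q + (1 / p).toReal = (2 : ℕ) by rw [hq]; push_cast; ring, Real.rpow_natCast]
    ring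
  calc eLpNorm (fun s => φ (ν s) * ν' s * (k s * ν' s)) p (volume.restrict J)
      = eLpNorm (fun s => k s * ν' s ^ (1 + q) * |ν' s| ^ (1 / p).toReal * φ (ν s)) p
          (volume.restrict J) :=
        eLpNorm_congr_ae ((ae_restrict_iff' hJ).2 (ae_of_all _ hfactor))
    _ ≤ eLpNorm (fun s => k s * ν' s ^ (1 + q)) ⊤ (volume.restrict J) *
          eLpNorm (fun s => φ (ν s)) p
            ((volume.restrict J).withDensity fun s => ENNReal.ofReal |ν' s|) :=
        eLpNorm_mul_rpow_abs_mul_le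
          (aestronglyMeasurable_restrict_of_hasDerivAt hJ hν).aemeasurable
          (hφ.comp_aemeasurable hνm).aestronglyMeasurable
          (ae_of_all _ fun s hs => by simp [hs, Real.zero_rpow hq1])
    _ = eLpNorm (fun s => k s * ν' s ^ (1 + q)) ⊤ (volume.restrict J) *
          eLpNorm φ p (volume.restrict (ν '' J)) := by
        rw [eLpNorm_comp_withDensity_abs_deriv p hJ (fun s hs => (hν s hs).hasDerivWithinAt) hinj
          hφ.aestronglyMeasurable]

section ComposedIntegrand
variable {J : Set ℝ} {ν ν' k D φ f : ℝ → ℝ} {q M : ℝ}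

theorem norm_comp_mul_le_of_abs_le (hf : ∀ x, |f x| ≤ M * |x| ^ q) (s : ℝ) :
    ‖f (ν s) * D s‖ ≤ M * ‖D s * |ν s| ^ q‖ := by
  rw [norm_mul, norm_mul, Real.norm_eq_abs, Real.norm_eq_abs, Real.norm_eq_abs,
    abs_of_nonneg (Real.rpow_nonneg (abs_nonneg _) _)]
  nlinarith [hf (ν s), abs_nonneg (D s)]

theorem intervalIntegrable_and_integral_deriv_comp_mul_eq_sub (hJ : J.OrdConnected)
    (h0 : 0 ∈ J) (hν_inj : InjOn ν J) (hν0 : ν 0 = 0)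
    (hν : ∀ s ∈ J, HasDerivAt ν (ν' s) s) (hν' : ∀ s ∈ J, 0 ≤ ν' s)
    (hkD : ∀ s ∈ J, HasDerivAt (fun s => k s * ν' s) (D s) s)
    (hφ : ∀ x y, IntervalIntegrable φ volume x y) (hf : ∀ x y, ∫ s in x..y, φ s = f y - f x)
    (hf_bound : ∀ x, |f x| ≤ M * |x| ^ q) (hD : IntegrableOn (fun s => D s * |ν s| ^ q) J)
    {t : ℝ} (ht : t ∈ J) :
    IntervalIntegrable (fun s => φ (ν s) * ν' s * (k s * ν' s) + f (ν s) * D s) volume 0 t ∧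
      ∫ s in (0:ℝ)..t, (φ (ν s) * ν' s * (k s * ν' s) + f (ν s) * D s) =
        f (ν t) * (k t * ν' t) - f 0 * (k 0 * ν' 0) := by
  have hνc : ContinuousOn ν J := fun s hs => (hν s hs).continuousAt.continuousWithinAt
  have hD_off : ∀ r ∈ J, ∀ s ∈ J, 0 ∉ uIcc r s → IntervalIntegrable D volume r s := by
    intro r hr s hs h0rs
    have hsub := hJ.uIcc_subset hr hs
    have hν_ne : ∀ x ∈ uIcc r s, ν x ≠ 0 := fun x hx h =>
      h0rs (hν_inj (hsub hx) h0 (h.trans hν0.symm) ▸ hx)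
    exact IntervalIntegrable.of_mul_continuousOn (hD.mono_set hsub).intervalIntegrable
      ((hνc.mono hsub).abs.rpow_const fun x hx => Or.inl (abs_ne_zero.2 (hν_ne x hx)))
      fun x hx => (Real.rpow_pos_of_pos (abs_pos.2 (hν_ne x hx)) q).ne'
  have hfD : IntegrableOn (fun s => f (ν s) * D s) J :=
    (hD.norm.const_mul M).mono'
      ((((continuous_of_forall_integral_eq_sub hφ hf).comp_continuousOn hνc).aestronglyMeasurable
        hJ.measurableSet).mul (aestronglyMeasurable_restrict_of_hasDerivAt hJ.measurableSet hkD))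
      (ae_of_all _ (norm_comp_mul_le_of_abs_le hf_bound))
  have hint : IntervalIntegrable (fun s => φ (ν s) * ν' s * (k s * ν' s) + f (ν s) * D s)
      volume 0 t :=
    ((intervalIntegrable_comp_mul_deriv_of_nonneg_on hJ hν hν' h0 ht (hφ _ _)).mul_continuousOn
      fun s hs => (hkD s (hJ.uIcc_subset h0 ht hs)).continuousAt.continuousWithinAt).add
      (hfD.mono_set (hJ.uIcc_subset h0 ht)).intervalIntegrable
  refine ⟨hint, ?_⟩
  rw [integral_deriv_comp_mul_eq_sub hJ hφ hf hν hν' hkD hD_off h0 ht hint, hν0]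

theorem eLpNorm_deriv_comp_mul_le {p : ℝ≥0∞} (hJ : MeasurableSet J) (hp : 1 ≤ p)
    (hq : q = 1 - (1 / p).toReal) (hν : ∀ s ∈ J, HasDerivAt ν (ν' s) s) (hν' : ∀ s ∈ J, 0 ≤ ν' s)
    (hν_inj : InjOn ν J) (hkD : ∀ s ∈ J, HasDerivAt (fun s => k s * ν' s) (D s) s)
    (hφ : Measurable φ) (hφp : eLpNorm φ p volume ≠ ⊤) (hf : Measurable f)
    (hf_bound : ∀ x, |f x| ≤ (eLpNorm φ p volume).toReal * |x| ^ q) :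
    eLpNorm (fun s => φ (ν s) * ν' s * (k s * ν' s) + f (ν s) * D s) p (volume.restrict J) ≤
      (eLpNorm (fun s => k s * ν' s ^ (1 + q)) ⊤ (volume.restrict J) +
        eLpNorm (fun s => D s * |ν s| ^ q) p (volume.restrict J)) * eLpNorm φ p volume := by
  have hνm : AEMeasurable ν (volume.restrict J) :=
    ContinuousOn.aemeasurable (fun s hs => (hν s hs).continuousAt.continuousWithinAt) hJ
  calc eLpNorm (fun s => φ (ν s) * ν' s * (k s * ν' s) + f (ν s) * D s) p (volume.restrict J)
      ≤ eLpNorm (fun s => φ (ν s) * ν' s * (k s * ν' s)) p (volume.restrict J) +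
          eLpNorm (fun s => f (ν s) * D s) p (volume.restrict J) :=
        eLpNorm_add_le (((hφ.comp_aemeasurable hνm).aestronglyMeasurable.mul
            (aestronglyMeasurable_restrict_of_hasDerivAt hJ hν)).mul
            (ContinuousOn.aestronglyMeasurable
              (fun s hs => (hkD s hs).continuousAt.continuousWithinAt) hJ))
          ((hf.comp_aemeasurable hνm).aestronglyMeasurable.mul
            (aestronglyMeasurable_restrict_of_hasDerivAt hJ hkD)) hp
    _ ≤ eLpNorm (fun s => k s * ν' s ^ (1 + q)) ⊤ (volume.restrict J) * eLpNorm φ p volume +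
          eLpNorm (fun s => D s * |ν s| ^ q) p (volume.restrict J) * eLpNorm φ p volume := by
        refine add_le_add ((eLpNorm_comp_mul_deriv_mul_le hJ hp hq hν hν' hν_inj hφ).trans
          (by gcongr; exact Measure.restrict_le_self))
          ((eLpNorm_le_mul_eLpNorm_of_ae_le_mul
            (ae_of_all _ (norm_comp_mul_le_of_abs_le hf_bound)) p).trans_eq ?_)
        rw [ofReal_toReal hφp, mul_comm]
    _ = _ := (add_mul _ _ _).symm

end ComposedIntegrand

theorem transformed_integrand_in_W1p_real_line_general
    (p : ℝ≥0∞) (hp : 1 < p) (q : ℝ) (hq : q = 1 - (1 / p).toReal)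
    (ρ ρ' : ℝ → ℝ)
    (hρ_deriv : ∀ x, HasDerivAt ρ (ρ' x) x)
    (ν ν' ν'' : ℝ → ℝ)
    (hν0 : ν 0 = 0)
    (hν_mono : StrictMonoOn ν (Ioo (-(1/2) : ℝ) (1/2)))
    (hν_deriv : ∀ t ∈ Ioo (-(1/2) : ℝ) (1/2), HasDerivAt ν (ν' t) t)
    (hν_deriv2 : ∀ t ∈ Ioo (-(1/2) : ℝ) (1/2), HasDerivAt ν' (ν'' t) t)
    (h₁ h₂ : ℝ → ℝ)
    (hh₁ : ∀ t, h₁ t = ρ (ν t) * ν' t ^ (1 + q))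
    (hh₂ : ∀ t, h₂ t = (ρ' (ν t) * ν' t ^ 2 + ρ (ν t) * ν'' t) * |ν t| ^ q)
    (hh₁_fin : eLpNorm h₁ ⊤ (volume.restrict (Ioo (-(1/2) : ℝ) (1/2))) < ⊤)
    (hh₂_fin : eLpNorm h₂ p (volume.restrict (Ioo (-(1/2) : ℝ) (1/2))) < ⊤)
    (f f' : ℝ → ℝ)
    (hf0 : f 0 = 0)
    (hf_repr : ∀ x : ℝ, f x = ∫ s in (0:ℝ)..x, f' s)
    (hf'Lp : MemLp f' p volume)
    (g : ℝ → ℝ) (hg : ∀ t, g t = f (ν t) * ρ (ν t) * ν' t) :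
    g 0 = 0 ∧
    ∃ g' : ℝ → ℝ,
      (∀ t ∈ Ioo (-(1/2) : ℝ) (1/2), IntervalIntegrable g' volume 0 t ∧
        g t = ∫ s in (0:ℝ)..t, g' s) ∧
      eLpNorm g' p (volume.restrict (Ioo (-(1/2) : ℝ) (1/2))) ≤
        (eLpNorm h₁ ⊤ (volume.restrict (Ioo (-(1/2) : ℝ) (1/2))) +
          eLpNorm h₂ p (volume.restrict (Ioo (-(1/2) : ℝ) (1/2)))) *
          eLpNorm f' p volume ∧
      eLpNorm g' p (volume.restrict (Ioo (-(1/2) : ℝ) (1/2))) < ⊤ := by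
  obtain ⟨φ, hφ, hf'φ, hf_φ⟩ := exists_measurable_ae_eq_integral_eq_sub hp.le hf'Lp hf_repr
  have hφ_int := (hf'Lp.ae_eq hf'φ).intervalIntegrable hp.le
  have hφp : eLpNorm φ p volume = eLpNorm f' p volume := eLpNorm_congr_ae hf'φ.symm
  have hf_bound : ∀ x, |f x| ≤ (eLpNorm φ p volume).toReal * |x| ^ q := fun x => by
    simpa [hf_repr x, hq, hφp] using abs_intervalIntegral_le_eLpNorm_mul_rpow hp.le hf'Lp 0 x
  have hν' : ∀ t ∈ Ioo (-(1/2) : ℝ) (1/2), 0 ≤ ν' t := fun t ht =>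
    hν_mono.monotoneOn.nonneg_of_hasDerivAt isOpen_Ioo ht (hν_deriv t ht)
  have hkD : ∀ t ∈ Ioo (-(1/2) : ℝ) (1/2), HasDerivAt (fun t => ρ (ν t) * ν' t)
      (ρ' (ν t) * ν' t ^ 2 + ρ (ν t) * ν'' t) t := fun t ht =>
    (((hρ_deriv (ν t)).comp t (hν_deriv t ht)).mul (hν_deriv2 t ht)).congr_deriv (by simp only [Function.comp_apply]; ring)
  have hh₂_eq : h₂ = fun t => (ρ' (ν t) * ν' t ^ 2 + ρ (ν t) * ν'' t) * |ν t| ^ q := funext hh₂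
  have hh₂_int : IntegrableOn (fun t => (ρ' (ν t) * ν' t ^ 2 + ρ (ν t) * ν'' t) * |ν t| ^ q)
      (Ioo (-(1/2) : ℝ) (1/2)) :=
    MemLp.integrable hp.le ⟨(aestronglyMeasurable_restrict_of_hasDerivAt measurableSet_Ioo hkD).mul
      ((ContinuousOn.aemeasurable (fun t ht => (hν_deriv t ht).continuousAt.continuousWithinAt)
        measurableSet_Ioo).abs.pow_const q).aestronglyMeasurable, hh₂_eq ▸ hh₂_fin⟩
  have hbound := eLpNorm_deriv_comp_mul_le measurableSet_Ioo hp.le hq hν_deriv hν' hν_mono.injOn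
    hkD hφ (hφp ▸ hf'Lp.eLpNorm_ne_top)
    (continuous_of_forall_integral_eq_sub hφ_int hf_φ).measurable hf_bound
  rw [← funext hh₁, ← hh₂_eq, hφp] at hbound
  refine ⟨by rw [hg, hν0, hf0]; ring, _, fun t ht => ?_, hbound,
    hbound.trans_lt (mul_lt_top (add_lt_top.2 ⟨hh₁_fin, hh₂_fin⟩) hf'Lp.eLpNorm_lt_top)⟩
  obtain ⟨hint, heq⟩ := intervalIntegrable_and_integral_deriv_comp_mul_eq_sub ordConnected_Ioo
    (by norm_num) hν_mono.injOn hν0 hν_deriv hν' hkD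
    hφ_int hf_φ hf_bound hh₂_int ht
  exact ⟨hint, by rw [heq, hg, hf0]; ring⟩

/-- **Theorem 3, `D = ℝ`.** Let `p ∈ (1,∞]` with `1/p* = 1 - 1/p = q`,
`ρ` a differentiable even positive probability density on `ℝ`, and
`ν : (-1/2,1/2) → ℝ` an odd, increasing, twice differentiable bijection with `ν(0) = 0`
and `ν(t) → ±∞` as `t → ±1/2`.  With `h_{1,p*}(t) = ρ(ν(t)) (ν'(t))^{1+1/p*}` and
`h_{2,p*}(t) = (d/dt)[ρ(ν(t)) ν'(t)] |ν(t)|^{1/p*}`, if `‖h_{1,p*}‖_{L_∞(-1/2,1/2)} < ∞`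
and `‖h_{2,p*}‖_{L_p(-1/2,1/2)} < ∞`, then for every `f ∈ F_{1,p}(ℝ)` the function
`g_{f,ν}(t) = f(ν(t)) ρ(ν(t)) ν'(t)` belongs to `W_{1,p}((-1/2,1/2))` with
`‖g_{f,ν}'‖_{L_p(-1/2,1/2)} ≤ (‖h_{1,p*}‖_{L_∞} + ‖h_{2,p*}‖_{L_p}) ‖f'‖_{L_p(ℝ)}`. -/
theorem transformed_integrand_in_W1p_real_line
    (p : ℝ≥0∞) (hp : 1 < p) (q : ℝ) (hq : q = 1 - (1 / p).toReal)
    (ρ ρ' : ℝ → ℝ) (hρ_pos : ∀ x, 0 < ρ x)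
    (hρ_even : ∀ x, ρ (-x) = ρ x)
    (hρ_deriv : ∀ x, HasDerivAt ρ (ρ' x) x)
    (hρ_int : Integrable ρ)
    (hρ_prob : ∫ x, ρ x = 1)
    (ν ν' ν'' : ℝ → ℝ)
    (hν0 : ν 0 = 0)
    (hν_odd : ∀ t ∈ Ioo (-(1/2) : ℝ) (1/2), ν (-t) = -ν t)
    (hν_mono : StrictMonoOn ν (Ioo (-(1/2) : ℝ) (1/2)))
    (hν_surj : SurjOn ν (Ioo (-(1/2) : ℝ) (1/2)) univ)
    (hν_deriv : ∀ t ∈ Ioo (-(1/2) : ℝ) (1/2), HasDerivAt ν (ν' t) t)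
    (hν_deriv2 : ∀ t ∈ Ioo (-(1/2) : ℝ) (1/2), HasDerivAt ν' (ν'' t) t)
    (hν_tendsto_top : Tendsto ν (nhdsWithin (1/2 : ℝ) (Iio (1/2))) atTop)
    (hν_tendsto_bot : Tendsto ν (nhdsWithin (-(1/2) : ℝ) (Ioi (-(1/2)))) atBot)
    (h₁ h₂ : ℝ → ℝ)
    (hh₁ : ∀ t, h₁ t = ρ (ν t) * ν' t ^ (1 + q))
    (hh₂ : ∀ t, h₂ t = (ρ' (ν t) * ν' t ^ 2 + ρ (ν t) * ν'' t) * |ν t| ^ q)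
    (hh₁_fin : eLpNorm h₁ ⊤ (volume.restrict (Ioo (-(1/2) : ℝ) (1/2))) < ⊤)
    (hh₂_fin : eLpNorm h₂ p (volume.restrict (Ioo (-(1/2) : ℝ) (1/2))) < ⊤)
    (f f' : ℝ → ℝ)
    (hf0 : f 0 = 0)
    (hf_int : ∀ x : ℝ, IntervalIntegrable f' volume 0 x)
    (hf_repr : ∀ x : ℝ, f x = ∫ s in (0:ℝ)..x, f' s)
    (hf'Lp : MemLp f' p volume)
    (g : ℝ → ℝ) (hg : ∀ t, g t = f (ν t) * ρ (ν t) * ν' t) :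
    g 0 = 0 ∧
    ∃ g' : ℝ → ℝ,
      (∀ t ∈ Ioo (-(1/2) : ℝ) (1/2), IntervalIntegrable g' volume 0 t ∧
        g t = ∫ s in (0:ℝ)..t, g' s) ∧
      eLpNorm g' p (volume.restrict (Ioo (-(1/2) : ℝ) (1/2))) ≤
        (eLpNorm h₁ ⊤ (volume.restrict (Ioo (-(1/2) : ℝ) (1/2))) +
          eLpNorm h₂ p (volume.restrict (Ioo (-(1/2) : ℝ) (1/2)))) *
          eLpNorm f' p volume ∧
      eLpNorm g' p (volume.restrict (Ioo (-(1/2) : ℝ) (1/2))) < ⊤ :=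
  transformed_integrand_in_W1p_real_line_general p hp q hq ρ ρ' hρ_deriv ν ν' ν'' hν0 hν_mono
    hν_deriv hν_deriv2 h₁ h₂ hh₁ hh₂ hh₁_fin hh₂_fin f f' hf0 hf_repr hf'Lp g hg
end

section
/- Let λ>0, ρ(x)=λ^{-1}·exp(-x/λ) for x≥0, p∈(1,∞], and for a>1 set ν_a(t)=-λ·a·ln(1-t) on [0,1). Then sup_{t∈[0,1)} ρ(ν_a(t))·ν_a'(t)·(ν_a(t))^{1/p*} = a^{1+1/p*}·(λ/(e·p*·(a-1)))^{1/p*}, while for a=1 this supremum is infinite. -/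
/-! Substituting `u = -log (1 - t)`, which maps `[0, 1)` onto `[0, ∞)`, turns the quantity into
`a (λ a u)^q e^{-(a-1) u}` with `q = 1/p*`. For `a > 1` the bound `x e^{-x} ≤ e^{-1}` at
`x = (a - 1) u / q` shows that this is maximal at `u = q / (a - 1)`; for `a = 1` it is
`(λ u)^q`, which is unbounded. -/

open MeasureTheory Set ENNReal Filter

lemma ENNReal.one_div_toReal_lt_one {p : ℝ≥0∞} (hp : 1 < p) : 1 / p.toReal < 1 := by
  rcases eq_or_ne p ⊤ with rfl | hp_top
  · simp
  · have h1 : 1 < p.toReal := by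
      simpa using ENNReal.toReal_strict_mono hp_top hp
    rwa [div_lt_one (zero_lt_one.trans h1)]

section ExponentialProfile

variable {k c q : ℝ}

lemma rpow_mul_exp_neg_le (hk : 0 ≤ k) (hc : 0 < c) (hq : 0 < q) {u : ℝ} (hu : 0 ≤ u) :
    (k * u) ^ q * Real.exp (-(c * u)) ≤ (k * q / (Real.exp 1 * c)) ^ q := by
  have hbase : k * u * Real.exp (-(c * u / q)) ≤ k * q / (Real.exp 1 * c) :=
    calc k * u * Real.exp (-(c * u / q))
          = k * q / c * (c * u / q * Real.exp (-(c * u / q))) := by field_simp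
      _ ≤ k * q / c * Real.exp (-1) := by gcongr; exact Real.mul_exp_neg_le_exp_neg_one _
      _ = k * q / (Real.exp 1 * c) := by rw [Real.exp_neg]; field_simp
  calc (k * u) ^ q * Real.exp (-(c * u)) = (k * u * Real.exp (-(c * u / q))) ^ q := by
        rw [Real.mul_rpow (by positivity) (Real.exp_pos _).le, ← Real.exp_mul]
        congr 3
        field_simp
    _ ≤ (k * q / (Real.exp 1 * c)) ^ q := by gcongr

lemma isGreatest_rpow_mul_exp_neg (hk : 0 ≤ k) (hc : 0 < c) (hq : 0 < q) :
    IsGreatest ((fun u ↦ (k * u) ^ q * Real.exp (-(c * u))) '' Ici 0)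
      ((k * q / (Real.exp 1 * c)) ^ q) := by
  refine ⟨⟨q / c, mem_Ici.2 (by positivity), ?_⟩, ?_⟩
  · calc (k * (q / c)) ^ q * Real.exp (-(c * (q / c)))
          = (k * (q / c)) ^ q * Real.exp (-1) ^ q := by
          rw [← Real.exp_mul]; congr 2; field_simp
      _ = (k * q / (Real.exp 1 * c)) ^ q := by
          rw [← Real.mul_rpow (by positivity) (Real.exp_pos _).le, Real.exp_neg]
          congr 1
          field_simp
  · rintro _ ⟨u, hu, rfl⟩
    exact rpow_mul_exp_neg_le hk hc hq hu

end ExponentialProfile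

lemma image_neg_log_one_sub_Ico : (fun t ↦ -Real.log (1 - t)) '' Ico (0 : ℝ) 1 = Ici 0 := by
  ext u
  constructor
  · rintro ⟨t, ⟨ht0, ht1⟩, rfl⟩
    exact neg_nonneg.2 (Real.log_nonpos (by linarith) (by linarith))
  · intro hu
    refine ⟨1 - Real.exp (-u), ⟨?_, ?_⟩, by simp⟩
    · linarith [Real.exp_le_one_iff.2 (neg_nonpos.2 (mem_Ici.1 hu))]
    · linarith [Real.exp_pos (-u)]

lemma biSup_Ico_comp_neg_log_one_sub {α : Type*} [CompleteLattice α] (F : ℝ → α) :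
    ⨆ t ∈ Ico (0 : ℝ) 1, F (-Real.log (1 - t)) = ⨆ u ∈ Ici (0 : ℝ), F u := by
  rw [← image_neg_log_one_sub_Ico, iSup_image]

lemma biSup_ofReal_eq_of_isGreatest {s : Set ℝ} {f : ℝ → ℝ} {m : ℝ}
    (h : IsGreatest (f '' s) m) : ⨆ x ∈ s, ENNReal.ofReal (f x) = ENNReal.ofReal m := by
  rw [← sSup_image, ← image_image]
  exact (ENNReal.ofReal_mono.map_isGreatest h).csSup_eq

lemma biSup_Ici_ofReal_eq_top {f : ℝ → ℝ} (hf : Tendsto f atTop atTop) (a : ℝ) :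
    ⨆ x ∈ Ici a, ENNReal.ofReal (f x) = ⊤ := by
  refine (iSup₂_eq_top _).2 fun b hb ↦ ?_
  obtain ⟨x, hfx, hxa⟩ := ((hf.eventually_gt_atTop b.toReal).and (eventually_ge_atTop a)).exists
  exact ⟨x, hxa, (ENNReal.lt_ofReal_iff_toReal_lt hb.ne).2 hfx⟩

lemma exponential_h0_integrand_eq {lam : ℝ} (hlam : lam ≠ 0) (a q : ℝ) {t : ℝ} (ht : t < 1) :
    lam⁻¹ * Real.exp (-(-(lam * a) * Real.log (1 - t)) / lam) * (lam * a / (1 - t)) *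
        (-(lam * a) * Real.log (1 - t)) ^ q =
      a * ((lam * a * -Real.log (1 - t)) ^ q * Real.exp (-((a - 1) * -Real.log (1 - t)))) := by
  have h1t : 1 - t = Real.exp (Real.log (1 - t)) := (Real.exp_log (by linarith)).symm
  set L := Real.log (1 - t)
  rw [h1t, show -(lam * a) * L = lam * a * -L by ring]
  have hexp : Real.exp (-(lam * a * -L) / lam) = Real.exp (-((a - 1) * -L)) * Real.exp L := by
    rw [← Real.exp_add]; congr 1; field_simp; ring
  rw [hexp]
  field_simp

theorem h0_exponential_density_general
    (lam : ℝ) (hlam : 0 < lam)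
    (ρ : ℝ → ℝ) (hρ : ∀ x, ρ x = lam⁻¹ * Real.exp (-x / lam))
    (p : ℝ≥0∞) (hp : 1 < p)
    (pstar : ℝ) (hpstar : 1 / p.toReal + 1 / pstar = 1)
    (a : ℝ)
    (ν ν' : ℝ → ℝ)
    (hν : ∀ t, ν t = -(lam * a) * Real.log (1 - t))
    (hν' : ∀ t, ν' t = lam * a / (1 - t)) :
    (1 < a →
      ⨆ t ∈ Ico (0:ℝ) 1, ENNReal.ofReal (ρ (ν t) * ν' t * ν t ^ (1 / pstar)) =
        ENNReal.ofReal (a ^ (1 + 1 / pstar) *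
          (lam / (Real.exp 1 * pstar * (a - 1))) ^ (1 / pstar))) ∧
    (a = 1 →
      ⨆ t ∈ Ico (0:ℝ) 1, ENNReal.ofReal (ρ (ν t) * ν' t * ν t ^ (1 / pstar)) = ⊤) := by
  have hq : 0 < 1 / pstar := by linarith [ENNReal.one_div_toReal_lt_one hp]
  have hsup : ⨆ t ∈ Ico (0:ℝ) 1, ENNReal.ofReal (ρ (ν t) * ν' t * ν t ^ (1 / pstar)) =
      ⨆ u ∈ Ici (0:ℝ), ENNReal.ofReal
        (a * ((lam * a * u) ^ (1 / pstar) * Real.exp (-((a - 1) * u)))) := by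
    rw [← biSup_Ico_comp_neg_log_one_sub]
    refine biSup_congr fun t ht ↦ ?_
    rw [hρ, hν, hν', exponential_h0_integrand_eq hlam.ne' a _ ht.2]
  rw [hsup]
  refine ⟨fun ha ↦ ?_, fun ha ↦ ?_⟩
  · have ha0 : 0 < a := zero_lt_one.trans ha
    have hc : 0 < a - 1 := sub_pos.2 ha
    have hps : 0 < pstar := one_div_pos.1 hq
    have hmax := (monotone_mul_left_of_nonneg ha0.le).map_isGreatest
      (isGreatest_rpow_mul_exp_neg (by positivity : 0 ≤ lam * a) hc hq)
    rw [image_image] at hmax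
    rw [biSup_ofReal_eq_of_isGreatest hmax, Real.rpow_add ha0, Real.rpow_one,
      mul_assoc a (a ^ _), ← Real.mul_rpow ha0.le (by positivity)]
    congr 3
    field_simp
  · subst ha
    apply biSup_Ici_ofReal_eq_top
    simp only [sub_self, zero_mul, neg_zero, Real.exp_zero, mul_one, one_mul]
    exact (tendsto_rpow_atTop hq).comp (tendsto_id.const_mul_atTop hlam)

/-- Let `λ > 0`, `ρ(x) = λ⁻¹ e^{-x/λ}`, `p ∈ (1,∞]` with conjugate
exponent `p*`, and `ν_a(t) = -λ a ln(1-t)` on `[0,1)` (so `ν_a'(t) = λa/(1-t)`).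
For `a > 1`,
`sup_{t∈[0,1)} ρ(ν_a(t)) ν_a'(t) (ν_a(t))^{1/p*} = a^{1+1/p*} (λ/(e p* (a-1)))^{1/p*}`,
while for `a = 1` this supremum is infinite. -/
theorem h0_exponential_density
    (lam : ℝ) (hlam : 0 < lam)
    (ρ : ℝ → ℝ) (hρ : ∀ x, ρ x = lam⁻¹ * Real.exp (-x / lam))
    (p : ℝ≥0∞) (hp : 1 < p)
    (pstar : ℝ) (hpstar : 1 / p.toReal + 1 / pstar = 1)
    (hp_top : p = ⊤ → pstar = 1)
    (a : ℝ) (ha : 1 ≤ a)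
    (ν ν' : ℝ → ℝ)
    (hν : ∀ t, ν t = -(lam * a) * Real.log (1 - t))
    (hν' : ∀ t, ν' t = lam * a / (1 - t)) :
    (1 < a →
      ⨆ t ∈ Ico (0:ℝ) 1, ENNReal.ofReal (ρ (ν t) * ν' t * ν t ^ (1 / pstar)) =
        ENNReal.ofReal (a ^ (1 + 1 / pstar) *
          (lam / (Real.exp 1 * pstar * (a - 1))) ^ (1 / pstar))) ∧
    (a = 1 →
      ⨆ t ∈ Ico (0:ℝ) 1, ENNReal.ofReal (ρ (ν t) * ν' t * ν t ^ (1 / pstar)) = ⊤) :=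
  h0_exponential_density_general lam hlam ρ hρ p hp pstar hpstar a ν ν' hν hν'
end

section
/- Let λ>0, ρ(x)=λ^{-1}·exp(-x/λ) for x≥0, and for a>2 set ν_a(t)=-λ·a·ln(1-t) on [0,1). Then sup_{t∈(0,1)} |(d/dt)[ρ(ν_a(t))·ν_a'(t)]|·ν_a(t) = a²·(a-1)·λ/((a-2)·e). -/
open MeasureTheory Set ENNReal

/-- Key bound: for `0 < v`, `-(v * log v) ≤ (exp 1)⁻¹`. -/
lemma neg_mul_log_le (v : ℝ) (hv : 0 < v) : -(v * Real.log v) ≤ (Real.exp 1)⁻¹ := by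
  have he : (0:ℝ) < Real.exp 1 := Real.exp_pos 1
  have h : Real.log ((Real.exp 1 * v)⁻¹) ≤ (Real.exp 1 * v)⁻¹ - 1 :=
    Real.log_le_sub_one_of_pos (by positivity)
  rw [Real.log_inv, Real.log_mul (ne_of_gt he) (ne_of_gt hv), Real.log_exp] at h
  -- h : -(1 + log v) ≤ (e*v)⁻¹ - 1
  have h2 : -Real.log v ≤ (Real.exp 1 * v)⁻¹ := by linarith
  have := mul_le_mul_of_nonneg_left h2 (le_of_lt hv)
  calc -(v * Real.log v) = v * (-Real.log v) := by ring
    _ ≤ v * (Real.exp 1 * v)⁻¹ := this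
    _ = (Real.exp 1)⁻¹ := by field_simp

/-- For `u ∈ (0,1)` and `c > 0`, `u^c * (-log u) ≤ 1/(c * e)`. -/
lemma rpow_mul_neg_log_le {u c : ℝ} (hu0 : 0 < u) (hu1 : u < 1) (hc : 0 < c) :
    u ^ c * (-Real.log u) ≤ 1 / (c * Real.exp 1) := by
  have hv : 0 < u ^ c := Real.rpow_pos_of_pos hu0 c
  have hlog : Real.log (u ^ c) = c * Real.log u := Real.log_rpow hu0 c
  have key := neg_mul_log_le (u ^ c) hv
  rw [hlog] at key
  have : u ^ c * (-Real.log u) = c⁻¹ * (-(u ^ c * (c * Real.log u))) := by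
    field_simp
  rw [this]
  have := mul_le_mul_of_nonneg_left key (le_of_lt (inv_pos.mpr hc))
  calc c⁻¹ * (-(u ^ c * (c * Real.log u))) ≤ c⁻¹ * (Real.exp 1)⁻¹ := this
    _ = 1 / (c * Real.exp 1) := by rw [one_div, mul_inv]

/-- Let `λ > 0`, `ρ(x) = λ⁻¹ e^{-x/λ}`, and for `a > 2` let
`ν_a(t) = -λ a ln(1-t)` on `[0,1)` (so `ν_a'(t) = λa/(1-t)` and
`ρ(ν_a(t)) ν_a'(t) = a (1-t)^{a-1}`).  Then
`sup_{t∈(0,1)} |(d/dt)[ρ(ν_a(t)) ν_a'(t)]| ν_a(t) = a² (a-1) λ / ((a-2) e)`. -/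
theorem h2_sup_exponential_density_p_infty
    (lam : ℝ) (hlam : 0 < lam)
    (ρ : ℝ → ℝ) (hρ : ∀ x, ρ x = lam⁻¹ * Real.exp (-x / lam))
    (a : ℝ) (ha : 2 < a)
    (ν ν' : ℝ → ℝ)
    (hν : ∀ t, ν t = -(lam * a) * Real.log (1 - t))
    (hν' : ∀ t, ν' t = lam * a / (1 - t)) :
    ⨆ t ∈ Ioo (0:ℝ) 1,
        ENNReal.ofReal (|deriv (fun s => ρ (ν s) * ν' s) t| * ν t) =
      ENNReal.ofReal (a ^ 2 * (a - 1) * lam / ((a - 2) * Real.exp 1)) := by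
  have ha0 : 0 < a := by linarith
  have ha1 : 0 < a - 1 := by linarith
  have hc : 0 < a - 2 := by linarith
  -- the function equals a * (1-s)^(a-1) for s < 1
  have heq : ∀ s : ℝ, s < 1 → ρ (ν s) * ν' s = a * (1 - s) ^ (a - 1) := by
    intro s hs
    have h1s : 0 < 1 - s := by linarith
    rw [hρ, hν, hν']
    have : -(-(lam * a) * Real.log (1 - s)) / lam = Real.log (1 - s) * a := by
      field_simp
    rw [this, ← Real.rpow_def_of_pos h1s]
    rw [show a - 1 = a - 1 by rfl]
    have : (1 - s) ^ (a - 1) = (1 - s) ^ a / (1 - s) := by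
      rw [Real.rpow_sub h1s, Real.rpow_one]
    rw [this]
    field_simp
  -- value of |deriv| * ν at t ∈ (0,1)
  have hval : ∀ t ∈ Ioo (0:ℝ) 1,
      |deriv (fun s => ρ (ν s) * ν' s) t| * ν t =
        a ^ 2 * (a - 1) * lam * ((1 - t) ^ (a - 2) * (-Real.log (1 - t))) := by
    intro t ht
    have h1t : 0 < 1 - t := by linarith [ht.2]
    have hd : deriv (fun s => ρ (ν s) * ν' s) t =
        a * ((a - 1) * (1 - t) ^ (a - 2) * (-1)) := by
      have hev : (fun s => ρ (ν s) * ν' s) =ᶠ[nhds t] fun s => a * (1 - s) ^ (a - 1) := by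
        filter_upwards [Iio_mem_nhds ht.2] with s hs using heq s hs
      rw [hev.deriv_eq]
      have h1 : HasDerivAt (fun s : ℝ => 1 - s) (-1) t := by
        simpa using (hasDerivAt_id t).const_sub 1
      have h2 : HasDerivAt (fun x : ℝ => x ^ (a - 1)) ((a - 1) * (1 - t) ^ (a - 1 - 1)) (1 - t) :=
        Real.hasDerivAt_rpow_const (Or.inl (ne_of_gt h1t))
      have h3 := (h2.comp t h1).const_mul a
      have : a - 1 - 1 = a - 2 := by ring
      rw [this] at h3
      exact h3.deriv
    have hlogneg : Real.log (1 - t) < 0 := Real.log_neg h1t (by linarith [ht.1])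
    have hpow : 0 < (1 - t) ^ (a - 2) := Real.rpow_pos_of_pos h1t _
    rw [hd, hν]
    rw [abs_of_neg (by nlinarith [mul_pos (mul_pos ha0 ha1) hpow])]
    ring
  -- rewrite the supremum
  have hKpos : 0 < a ^ 2 * (a - 1) * lam := by positivity
  set K := a ^ 2 * (a - 1) * lam with hK
  have hRHS : a ^ 2 * (a - 1) * lam / ((a - 2) * Real.exp 1) =
      K * (1 / ((a - 2) * Real.exp 1)) := by rw [hK]; ring
  rw [hRHS]
  apply le_antisymm
  · apply iSup₂_le
    intro t ht
    rw [hval t ht]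
    apply ENNReal.ofReal_le_ofReal
    have hb := rpow_mul_neg_log_le (u := 1 - t) (c := a - 2)
      (by linarith [ht.2]) (by linarith [ht.1]) hc
    exact mul_le_mul_of_nonneg_left hb (le_of_lt hKpos)
  · -- attained at t₀ = 1 - exp (-(a-2)⁻¹)
    set t₀ : ℝ := 1 - Real.exp (-(a - 2)⁻¹) with ht₀
    have hexp_pos : 0 < Real.exp (-(a - 2)⁻¹) := Real.exp_pos _
    have hexp_lt : Real.exp (-(a - 2)⁻¹) < 1 :=
      Real.exp_lt_one_iff.mpr (neg_lt_zero.mpr (inv_pos.mpr hc))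
    have ht₀mem : t₀ ∈ Ioo (0:ℝ) 1 := ⟨by simp [ht₀]; linarith, by simp [ht₀]; linarith⟩
    have h1t₀ : 1 - t₀ = Real.exp (-(a - 2)⁻¹) := by simp [ht₀]
    have hvals : (1 - t₀) ^ (a - 2) * (-Real.log (1 - t₀)) = 1 / ((a - 2) * Real.exp 1) := by
      rw [h1t₀, ← Real.exp_mul, Real.log_exp]
      have : -(a - 2)⁻¹ * (a - 2) = -1 := by field_simp
      rw [this, Real.exp_neg]
      field_simp
    refine le_iSup₂_of_le t₀ ht₀mem ?_
    rw [hval t₀ ht₀mem, hvals]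
end

section
/- Let λ>0, ρ(x)=λ^{-1}·exp(-x/λ) for x≥0, let p≥2 be an integer with conjugate exponent p*, and let a>1+1/p*. For ν_a(t)=-λ·a·ln(1-t) on [0,1), one has (∫_0^1 |(d/dt)[ρ(ν_a(t))ν_a'(t)]·(ν_a(t))^{1/p*}|^p dt)^{1/p} = ((a-1)·a^{1+1/p*}/(p(a-2)+1))·λ^{1/p*}·((p-1)!)^{1/p}. -/
open MeasureTheory Set ENNReal

/-!
Along `ν_a` the density becomes a power: `ρ(ν_a(t)) ν_a'(t) = a (1 - t)^(a - 1)`. Hence, using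
`p / p* = p - 1`, the `p`-th power of `|h_{2,p*}|` is
`(a (a - 1))^p (λ a)^(p - 1) (1 - t)^(p (a - 2)) (-log (1 - t))^(p - 1)`, and the substitution
`t = 1 - e^(-u)` turns its integral into the Gamma integral
`∫₀^∞ u^(p - 1) e^(-(p (a - 2) + 1) u) du = (p - 1)! / (p (a - 2) + 1)^p`.
-/

theorem image_one_sub_exp_neg_Ioi :
    (fun u : ℝ => 1 - Real.exp (-u)) '' Ioi 0 = Ioo (0 : ℝ) 1 := by
  ext t
  constructor
  · rintro ⟨u, hu, rfl⟩
    have hexp : Real.exp (-u) < 1 := Real.exp_lt_one_iff.mpr (neg_neg_of_pos hu)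
    exact ⟨by linarith, by linarith [Real.exp_pos (-u)]⟩
  · rintro ⟨ht0, ht1⟩
    refine ⟨-Real.log (1 - t), neg_pos.mpr (Real.log_neg (by linarith) (by linarith)), ?_⟩
    simp only [neg_neg]
    rw [Real.exp_log (by linarith), _root_.sub_sub_cancel]

theorem lintegral_Ioo_zero_one_eq_lintegral_Ioi_exp_neg (g : ℝ → ℝ≥0∞) :
    ∫⁻ t in Ioo (0 : ℝ) 1, g t =
      ∫⁻ u in Ioi (0 : ℝ), ENNReal.ofReal (Real.exp (-u)) * g (1 - Real.exp (-u)) := by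
  have hderiv : ∀ u ∈ Ioi (0 : ℝ),
      HasDerivWithinAt (fun u : ℝ => 1 - Real.exp (-u)) (Real.exp (-u)) (Ioi 0) u := fun u _ => by
    simpa using ((hasDerivAt_neg u).exp.const_sub 1).hasDerivWithinAt
  have hmono : StrictMono fun u : ℝ => 1 - Real.exp (-u) := fun u v huv => by
    simpa using huv
  rw [← image_one_sub_exp_neg_Ioi,
    lintegral_image_eq_lintegral_abs_deriv_mul measurableSet_Ioi hderiv hmono.injective.injOn]
  simp only [abs_of_pos (Real.exp_pos _)]

theorem lintegral_one_sub_rpow_mul_neg_log_rpow {b s : ℝ} (hb : 0 < b) (hs : 0 < s) :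
    ∫⁻ t in Ioo (0 : ℝ) 1,
        ENNReal.ofReal ((1 - t) ^ (b - 1) * (-Real.log (1 - t)) ^ (s - 1)) =
      ENNReal.ofReal ((1 / b) ^ s * Real.Gamma s) := by
  have hintegrand : ∀ u ∈ Ioi (0 : ℝ), ENNReal.ofReal (Real.exp (-u)) *
      ENNReal.ofReal ((1 - (1 - Real.exp (-u))) ^ (b - 1) *
        (-Real.log (1 - (1 - Real.exp (-u)))) ^ (s - 1)) =
      ENNReal.ofReal (u ^ (s - 1) * Real.exp (-(b * u))) := fun u _ => by
    rw [← ofReal_mul (Real.exp_pos _).le, _root_.sub_sub_cancel, Real.log_exp, neg_neg,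
      ← Real.exp_mul, ← mul_assoc, mul_comm (Real.exp _), ← Real.exp_add, mul_comm (u ^ _)]
    ring_nf
  have hint : IntegrableOn (fun u : ℝ => u ^ (s - 1) * Real.exp (-(b * u))) (Ioi 0) := by
    simpa [Real.rpow_one, neg_mul] using
      integrableOn_rpow_mul_exp_neg_mul_rpow (by linarith : -1 < s - 1) one_pos hb
  rw [lintegral_Ioo_zero_one_eq_lintegral_Ioi_exp_neg,
    setLIntegral_congr_fun measurableSet_Ioi hintegrand,
    ← ofReal_integral_eq_lintegral_ofReal hint, Real.integral_rpow_mul_exp_neg_mul_Ioi hs hb]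
  filter_upwards [ae_restrict_mem measurableSet_Ioi] with u (hu : 0 < u)
  positivity

theorem exp_density_comp_mul_eq {lam a s : ℝ} (hlam : lam ≠ 0) (hs : s < 1) :
    lam⁻¹ * Real.exp (-(-(lam * a) * Real.log (1 - s)) / lam) * (lam * a / (1 - s)) =
      a * (1 - s) ^ (a - 1) := by
  have hs' : 0 < 1 - s := by linarith
  rw [show -(-(lam * a) * Real.log (1 - s)) / lam = Real.log (1 - s) * a by field_simp,
    ← Real.rpow_def_of_pos hs', Real.rpow_sub hs', Real.rpow_one]
  field_simp

theorem deriv_exp_density_comp_mul {lam a t : ℝ} (hlam : lam ≠ 0) (ht : t < 1) :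
    deriv (fun s => lam⁻¹ * Real.exp (-(-(lam * a) * Real.log (1 - s)) / lam) *
      (lam * a / (1 - s))) t = -(a * (a - 1)) * (1 - t) ^ (a - 2) := by
  have hloc : (fun s => lam⁻¹ * Real.exp (-(-(lam * a) * Real.log (1 - s)) / lam) *
      (lam * a / (1 - s))) =ᶠ[nhds t] fun s => a * (1 - s) ^ (a - 1) := by
    filter_upwards [Iio_mem_nhds ht] with s hs using exp_density_comp_mul_eq hlam hs
  have hderiv := (((hasDerivAt_id' t).const_sub 1).rpow_const
    (p := a - 1) (Or.inl (sub_pos.mpr ht).ne')).const_mul a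
  rw [hloc.deriv_eq, hderiv.deriv, show a - 1 - 1 = a - 2 by ring]
  ring

theorem abs_neg_mul_rpow_mul_neg_mul_log_rpow_rpow {A M x e r p : ℝ} (hA : 0 ≤ A) (hM : 0 ≤ M)
    (hx0 : 0 < x) (hx1 : x ≤ 1) :
    |-A * x ^ e * (-M * Real.log x) ^ r| ^ p =
      A ^ p * M ^ (r * p) * (x ^ (e * p) * (-Real.log x) ^ (r * p)) := by
  have hlog : 0 ≤ -Real.log x := neg_nonneg.mpr (Real.log_nonpos hx0.le hx1)
  rw [neg_mul M, ← mul_neg, neg_mul, neg_mul, abs_neg, abs_of_nonneg (by positivity),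
    Real.mul_rpow hM hlog, Real.mul_rpow (by positivity) (by positivity),
    Real.mul_rpow hA (by positivity), Real.mul_rpow (by positivity) (by positivity),
    ← Real.rpow_mul hx0.le, ← Real.rpow_mul hM, ← Real.rpow_mul hlog]
  ring

theorem mul_rpow_sub_one_mul_rpow_one_div {A M B F p : ℝ} (hA : 0 ≤ A) (hM : 0 ≤ M)
    (hB : 0 ≤ B) (hF : 0 ≤ F) (hp : p ≠ 0) :
    (A ^ p * M ^ (p - 1) * (B ^ p * F)) ^ (1 / p) = A * B * M ^ (1 - 1 / p) * F ^ (1 / p) := by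
  rw [Real.mul_rpow (by positivity) (by positivity), Real.mul_rpow (by positivity) (by positivity),
    Real.mul_rpow (by positivity) hF, ← Real.rpow_mul hA, ← Real.rpow_mul hM,
    ← Real.rpow_mul hB,
    mul_one_div_cancel hp, sub_mul, mul_one_div_cancel hp, one_mul, Real.rpow_one, Real.rpow_one]
  ring

/-- Let `λ > 0`, `ρ(x) = λ⁻¹ e^{-x/λ}`, `p ≥ 2` an integer with
conjugate exponent `p*`, and `a > 1 + 1/p*`.  For `ν_a(t) = -λ a ln(1-t)` on `[0,1)`
(so `ν_a'(t) = λa/(1-t)`), the `L_p(0,1)`-norm of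
`h_{2,p*}(t) = (d/dt)[ρ(ν_a(t)) ν_a'(t)] (ν_a(t))^{1/p*}` equals
`((a-1) a^{1+1/p*} / (p(a-2)+1)) λ^{1/p*} ((p-1)!)^{1/p}`. -/
theorem h2_Lp_norm_exponential_density
    (lam : ℝ) (hlam : 0 < lam)
    (ρ : ℝ → ℝ) (hρ : ∀ x, ρ x = lam⁻¹ * Real.exp (-x / lam))
    (p : ℕ) (hp : 2 ≤ p)
    (pstar : ℝ) (hpstar : 1 / (p : ℝ) + 1 / pstar = 1)
    (a : ℝ) (ha : 1 + 1 / pstar < a)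
    (ν ν' : ℝ → ℝ)
    (hν : ∀ t, ν t = -(lam * a) * Real.log (1 - t))
    (hν' : ∀ t, ν' t = lam * a / (1 - t)) :
    (∫⁻ t in Ioo (0:ℝ) 1,
        ENNReal.ofReal
          (|deriv (fun s => ρ (ν s) * ν' s) t * ν t ^ (1 / pstar)| ^ (p : ℝ))) ^
        (1 / (p : ℝ)) =
      ENNReal.ofReal
        ((a - 1) * a ^ (1 + 1 / pstar) / ((p : ℝ) * (a - 2) + 1) *
          lam ^ (1 / pstar) * (Nat.factorial (p - 1) : ℝ) ^ (1 / (p : ℝ))) := by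
  have hp1 : (1 : ℝ) ≤ p := Nat.one_le_cast.mpr (by omega)
  have hp0 : (0 : ℝ) < p := by linarith
  have hpstar_eq : 1 / pstar = 1 - 1 / p := eq_sub_of_add_eq' hpstar
  have hpstar_mul : 1 / pstar * p = p - 1 := by
    rw [hpstar_eq, sub_mul, one_div_mul_cancel hp0.ne', one_mul]
  have hc : 0 < p * (a - 2) + 1 := by
    have : 0 < p * (a - 2 + 1 / p) := mul_pos hp0 (by linarith)
    rwa [mul_add, mul_one_div_cancel hp0.ne'] at this
  have ha1 : 1 < a := by linarith [div_le_one_of_le₀ hp1 hp0.le]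
  set c : ℝ := p * (a - 2) + 1
  set K : ℝ := (a * (a - 1)) ^ (p : ℝ) * (lam * a) ^ ((p : ℝ) - 1)
  have hintegrand : ∀ t ∈ Ioo (0 : ℝ) 1,
      ENNReal.ofReal (|deriv (fun s => ρ (ν s) * ν' s) t * ν t ^ (1 / pstar)| ^ (p : ℝ)) =
        ENNReal.ofReal K *
          ENNReal.ofReal ((1 - t) ^ (c - 1) * (-Real.log (1 - t)) ^ ((p : ℝ) - 1)) := by
    intro t ⟨ht0, ht1⟩
    simp only [hρ, hν, hν']
    rw [deriv_exp_density_comp_mul hlam.ne' ht1, abs_neg_mul_rpow_mul_neg_mul_log_rpow_rpow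
      (by nlinarith) (by positivity) (by linarith) (by linarith),
      ← ENNReal.ofReal_mul (by positivity), hpstar_mul, show (a - 2) * p = c - 1 by ring]
  have hGamma : Real.Gamma p = (p - 1).factorial := by
    obtain ⟨n, rfl⟩ : ∃ n, p = n + 1 := ⟨p - 1, by omega⟩
    simpa using Real.Gamma_nat_eq_factorial n
  rw [setLIntegral_congr_fun measurableSet_Ioo hintegrand, lintegral_const_mul' _ _ ofReal_ne_top,
    lintegral_one_sub_rpow_mul_neg_log_rpow hc hp0, hGamma, ← ofReal_mul (by positivity),
    ofReal_rpow_of_nonneg (by positivity) (by positivity)]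
  congr 1
  rw [mul_rpow_sub_one_mul_rpow_one_div (by positivity) (by positivity) (by positivity)
    (by positivity) hp0.ne', ← hpstar_eq, Real.mul_rpow hlam.le (by positivity),
    Real.rpow_add (by positivity), Real.rpow_one]
  ring
end

section
/- Let λ>0, ρ(x)=λ^{-1}·exp(-x/λ) for x≥0, let p≥2 be an integer with conjugate exponent p*, and let a>1+1/p*. Then for every f∈F_{1,p}(ℝ_+), the function g_{f,ν_a}(t)=f(ν_a(t))ρ(ν_a(t))ν_a'(t), where ν_a(t)=-λ·a·ln(1-t), satisfies g_{f,ν_a}(0)=0, g_{f,ν_a}∈W_{1,p}, and ‖g_{f,ν_a}'‖_{L_p(0,1)} ≤ a^{1+1/p*}·λ^{1/p*}·(1 + (a-1)·((p-1)!)^{1/p}/(p(a-2)+1))·‖f'‖_{L_p(0,∞)}. -/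
/-!
Write `c = λa`, `ν = ν_a` and `F(x) = ∫₀ˣ f'`. Since `ρ(ν t) ν'(t) = a (1-t)^(a-1)`, we have
`g(t) = F(ν t) · a (1-t)^(a-1)`, and the product rule for an absolutely continuous function times
a `C¹` one gives `g'(t) = f'(ν t) · a c (1-t)^(a-2) - F(ν t) · a (a-1) (1-t)^(a-2)`.

Both terms are estimated in `L_p(0,1)` through the substitution `x = ν t`, for which
`dt = (1-t) dx / c` and `1 - t = e^(-x/c)`; with `κ = p(a-2) + 1 > 0` the weight becomes
`(1-t)^(p(a-2)) dt = e^(-κx/c) dx / c`. For the first term the weight is simply bounded by `1/c`.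
For the second, Hölder's inequality gives `|F(x)| ≤ ‖f'‖_p x^(1/p*)`, which leaves the Gamma
integral `∫₀^∞ x^(p-1) e^(-κx/c) dx = Γ(p) (c/κ)^p`.
-/

open MeasureTheory Set ENNReal
open scoped NNReal

theorem absolutelyContinuousOnInterval_of_hasDerivAt {u u' : ℝ → ℝ} {a b : ℝ}
    (hu : ∀ x ∈ uIcc a b, HasDerivAt u (u' x) x) (hu' : ContinuousOn u' (uIcc a b)) :
    AbsolutelyContinuousOnInterval u a b := by
  obtain ⟨C, hC⟩ := isCompact_uIcc.exists_bound_of_continuousOn hu'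
  refine LipschitzOnWith.absolutelyContinuousOnInterval (K := C.toNNReal) ?_
  refine (convex_uIcc a b).lipschitzOnWith_of_nnnorm_hasDerivWithin_le
    (fun x hx => (hu x hx).hasDerivWithinAt) fun x hx => ?_
  rw [← NNReal.coe_le_coe, coe_nnnorm, Real.coe_toNNReal']
  exact le_max_of_le_left (hC x hx)

theorem intervalIntegral.integral_mul_add_primitive_mul_deriv {h u u' : ℝ → ℝ} {a b : ℝ}
    (hh : IntervalIntegrable h volume a b) (hu : ∀ x ∈ uIcc a b, HasDerivAt u (u' x) x)
    (hu' : ContinuousOn u' (uIcc a b)) :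
    ∫ x in a..b, (h x * u x + (∫ y in a..x, h y) * u' x) = (∫ x in a..b, h x) * u b := by
  have hH := hh.absolutelyContinuousOnInterval_intervalIntegral left_mem_uIcc
  have key := hH.integral_deriv_mul_eq_sub (absolutelyContinuousOnInterval_of_hasDerivAt hu hu')
  simp only [intervalIntegral.integral_same, zero_mul, sub_zero] at key
  rw [← key]
  refine intervalIntegral.integral_congr_ae ?_
  filter_upwards [hh.ae_hasDerivAt_integral] with x hx hxab
  have hx' := uIoc_subset_uIcc hxab
  rw [(hx hx' a left_mem_uIcc).deriv, (hu x hx').deriv]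

theorem hasDerivAt_const_mul_one_sub_rpow (a : ℝ) {t : ℝ} (ht : t < 1) :
    HasDerivAt (fun s => a * (1 - s) ^ (a - 1)) (-(a * (a - 1)) * (1 - t) ^ (a - 2)) t :=
  (((hasDerivAt_id' t).const_sub 1).rpow_const (Or.inl (sub_pos.2 ht).ne')).const_mul a
    |>.congr_deriv (by rw [show a - 1 - 1 = a - 2 by ring]; ring)

theorem continuousOn_const_mul_one_sub_rpow (a b : ℝ) :
    ContinuousOn (fun s => a * (1 - s) ^ b) (Iio 1) :=
  continuousOn_const.mul ((continuousOn_const.sub continuousOn_id).rpow_const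
    fun _ hs => Or.inl (sub_pos.2 hs).ne')

theorem uIcc_zero_subset_Iio_one {t : ℝ} (ht : t < 1) : uIcc 0 t ⊆ Iio 1 :=
  fun _ hs => hs.2.trans_lt (max_lt one_pos ht)

theorem eLpNorm_le_iff_lintegral_rpow_le {α : Type*} [MeasurableSpace α] {μ : Measure α}
    {G : α → ℝ} {p : ℝ≥0} (hp : p ≠ 0) {C : ℝ≥0∞} :
    eLpNorm G p μ ≤ C ↔ ∫⁻ x, ‖G x‖ₑ ^ (p : ℝ) ∂μ ≤ C ^ (p : ℝ) := by
  rw [← ENNReal.rpow_le_rpow_iff (NNReal.coe_pos.2 (pos_iff_ne_zero.2 hp)),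
    eLpNorm_nnreal_pow_eq_lintegral hp]

theorem enorm_intervalIntegral_le_eLpNorm_mul_rpow {f : ℝ → ℝ} {p : ℝ≥0} (hp : 1 ≤ p)
    (hf : AEStronglyMeasurable f (volume.restrict (Ioi 0))) {x : ℝ} (hx : 0 ≤ x) :
    ‖∫ y in 0..x, f y‖ₑ ≤
      eLpNorm f p (volume.restrict (Ioi 0)) * ENNReal.ofReal x ^ (1 - 1 / (p : ℝ)) := by
  have hsub : volume.restrict (Ioc 0 x) ≤ volume.restrict (Ioi 0) :=
    Measure.restrict_mono Ioc_subset_Ioi_self le_rfl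
  rw [intervalIntegral.integral_of_le hx]
  calc ‖∫ y in Ioc 0 x, f y‖ₑ ≤ eLpNorm f 1 (volume.restrict (Ioc 0 x)) := by
        rw [eLpNorm_one_eq_lintegral_enorm]; exact enorm_integral_le_lintegral_enorm f
    _ ≤ eLpNorm f p (volume.restrict (Ioc 0 x)) *
          volume.restrict (Ioc 0 x) univ ^ (1 / (1 : ℝ≥0∞).toReal - 1 / (p : ℝ≥0∞).toReal) :=
        eLpNorm_le_eLpNorm_mul_rpow_measure_univ (by exact_mod_cast hp) (hf.mono_measure hsub)
    _ ≤ _ := by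
        simp only [Measure.restrict_apply_univ, Real.volume_Ioc, sub_zero, toReal_one,
          div_one, coe_toReal]
        gcongr

theorem lintegral_rpow_mul_exp_neg_mul_Ioi {s r : ℝ} (hs : 0 < s) (hr : 0 < r) :
    ∫⁻ x in Ioi 0, ENNReal.ofReal (x ^ (s - 1) * Real.exp (-(r * x))) =
      ENNReal.ofReal ((1 / r) ^ s * Real.Gamma s) := by
  rw [← Real.integral_rpow_mul_exp_neg_mul_Ioi hs hr, ofReal_integral_eq_lintegral_ofReal]
  · have h := integrableOn_rpow_mul_exp_neg_mul_rpow (show -1 < s - 1 by linarith) one_pos hr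
    simp only [Real.rpow_one, neg_mul] at h
    exact h
  · filter_upwards [ae_restrict_mem measurableSet_Ioi] with x hx
    exact mul_nonneg (Real.rpow_nonneg hx.le _) (Real.exp_pos _).le

theorem MeasureTheory.MemLp.exists_measurable_locallyIntegrable_ae_eq {f : ℝ → ℝ} {s : Set ℝ}
    (hs : MeasurableSet s) {p : ℝ≥0∞} (hp : 1 ≤ p) (hf : MemLp f p (volume.restrict s)) :
    ∃ f₀ : ℝ → ℝ, Measurable f₀ ∧ LocallyIntegrable f₀ ∧ f₀ =ᵐ[volume.restrict s] f := by
  refine ⟨s.indicator (hf.1.mk f), hf.1.stronglyMeasurable_mk.measurable.indicator hs,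
    ((memLp_indicator_iff_restrict hs).2 (hf.ae_eq hf.1.ae_eq_mk)).locallyIntegrable hp, ?_⟩
  filter_upwards [hf.1.ae_eq_mk, ae_restrict_mem hs] with x hx hxs
  rw [indicator_of_mem hxs, hx]

/-- The quantile function of the exponential distribution with mean `c`; the paper's `ν_a` is
`expQuantile (λ * a)`. -/
noncomputable def expQuantile (c t : ℝ) : ℝ := -c * Real.log (1 - t)

namespace expQuantile

variable {c t : ℝ}

@[simp] theorem zero_right (c : ℝ) : expQuantile c 0 = 0 := by simp [expQuantile]

theorem measurable (c : ℝ) : Measurable (expQuantile c) := by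
  unfold expQuantile; fun_prop

theorem hasDerivAt (c : ℝ) (ht : t < 1) : HasDerivAt (expQuantile c) (c / (1 - t)) t :=
  ((((hasDerivAt_id' t).const_sub 1).log (sub_pos.2 ht).ne').const_mul (-c)).congr_deriv (by ring)

theorem continuousOn (c : ℝ) : ContinuousOn (expQuantile c) (Iio 1) :=
  fun _ ht => (hasDerivAt c ht).continuousAt.continuousWithinAt

theorem strictMonoOn (hc : 0 < c) : StrictMonoOn (expQuantile c) (Iio 1) := by
  intro x _ y hy hxy
  have := Real.log_lt_log (sub_pos.2 hy) (show 1 - y < 1 - x by linarith)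
  simp only [expQuantile]
  nlinarith

theorem nonneg (hc : 0 < c) (ht0 : 0 ≤ t) (ht1 : t < 1) : 0 ≤ expQuantile c t := by
  simpa using (strictMonoOn hc).monotoneOn (show (0:ℝ) ∈ Iio 1 by norm_num) ht1 ht0

theorem exp_neg_div (hc : c ≠ 0) (ht : t < 1) : Real.exp (-expQuantile c t / c) = 1 - t := by
  rw [expQuantile, neg_mul, neg_neg, mul_div_cancel_left₀ _ hc, Real.exp_log (by linarith)]

theorem inv_mul_exp_neg_div_mul {lam a : ℝ} (hlam : lam ≠ 0) (ht : t < 1) :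
    lam⁻¹ * Real.exp (-expQuantile (lam * a) t / lam) * (lam * a / (1 - t)) =
      a * (1 - t) ^ (a - 1) := by
  have hy := sub_pos.2 ht
  have : -expQuantile (lam * a) t / lam = Real.log (1 - t) * a := by
    unfold expQuantile; field_simp
  rw [this, ← Real.rpow_def_of_pos hy, Real.rpow_sub_one hy.ne']
  field_simp

theorem image_Ioo (hc : 0 < c) : expQuantile c '' Ioo 0 1 = Ioi 0 := by
  ext x
  constructor
  · rintro ⟨t, ⟨ht0, ht1⟩, rfl⟩
    simpa using strictMonoOn hc (show (0:ℝ) ∈ Iio 1 by norm_num) ht1 ht0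
  · intro hx
    refine ⟨1 - Real.exp (-x / c), ⟨?_, ?_⟩, ?_⟩
    · have : -x / c < 0 := div_neg_of_neg_of_pos (neg_lt_zero.2 hx) hc
      linarith [Real.exp_lt_one_iff.2 this]
    · linarith [Real.exp_pos (-x / c)]
    · rw [expQuantile, _root_.sub_sub_cancel, Real.log_exp]
      field_simp

theorem lintegral_comp_mul (hc : 0 < c) (G : ℝ → ℝ≥0∞) :
    ∫⁻ t in Ioo 0 1, ENNReal.ofReal (c / (1 - t)) * G (expQuantile c t) = ∫⁻ x in Ioi 0, G x := by
  rw [← image_Ioo hc, lintegral_image_eq_lintegral_abs_deriv_mul measurableSet_Ioo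
    (fun t ht => (hasDerivAt c ht.2).hasDerivWithinAt)
    ((strictMonoOn hc).injOn.mono fun t ht => ht.2)]
  refine setLIntegral_congr_fun measurableSet_Ioo fun t ht => ?_
  rw [abs_of_pos (div_pos hc (sub_pos.2 ht.2))]

theorem integral_comp_mul (hc : 0 < c) (ht : t < 1) (f : ℝ → ℝ) :
    ∫ s in 0..t, f (expQuantile c s) * (c / (1 - s)) = ∫ x in 0..expQuantile c t, f x := by
  have hlt := uIcc_zero_subset_Iio_one ht
  simpa using intervalIntegral.integral_comp_mul_deriv_of_deriv_nonneg (g := f)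
    ((continuousOn c).mono hlt) (fun s hs => hasDerivAt c (hlt (Ioo_subset_Icc_self hs)))
    (fun s hs => (div_pos hc (sub_pos.2 (hlt (Ioo_subset_Icc_self hs)))).le)

theorem intervalIntegrable_comp_mul_iff (hc : 0 < c) (ht : t < 1) {f : ℝ → ℝ} :
    IntervalIntegrable (fun s => f (expQuantile c s) * (c / (1 - s))) volume 0 t ↔
      IntervalIntegrable f volume 0 (expQuantile c t) := by
  have hlt := uIcc_zero_subset_Iio_one ht
  simpa using intervalIntegral.integrable_comp_mul_deriv_iff_of_deriv_nonneg (g := f)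
    ((continuousOn c).mono hlt) (fun s hs => hasDerivAt c (hlt (Ioo_subset_Icc_self hs)))
    (fun s hs => (div_pos hc (sub_pos.2 (hlt (Ioo_subset_Icc_self hs)))).le)

section Representation

variable {f u u' : ℝ → ℝ}

theorem intervalIntegrable_deriv_primitive_comp_mul (hc : 0 < c) (ht : t < 1)
    (hf : IntervalIntegrable f volume 0 (expQuantile c t))
    (hu : ∀ s < 1, HasDerivAt u (u' s) s) (hu' : ContinuousOn u' (Iio 1)) :
    IntervalIntegrable (fun s => f (expQuantile c s) * (c / (1 - s)) * u s +
      (∫ x in 0..expQuantile c s, f x) * u' s) volume 0 t := by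
  have hlt := uIcc_zero_subset_Iio_one ht
  have hh := (intervalIntegrable_comp_mul_iff hc ht).2 hf
  have hF : ContinuousOn (fun s => ∫ x in 0..expQuantile c s, f x) (uIcc 0 t) :=
    (intervalIntegral.continuousOn_primitive_interval' hh left_mem_uIcc).congr
      fun s hs => (integral_comp_mul hc (hlt hs) f).symm
  exact (hh.mul_continuousOn fun s hs => (hu s (hlt hs)).continuousAt.continuousWithinAt).add
    (hF.mul (hu'.mono hlt)).intervalIntegrable

theorem integral_deriv_primitive_comp_mul (hc : 0 < c) (ht : t < 1)
    (hf : IntervalIntegrable f volume 0 (expQuantile c t))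
    (hu : ∀ s < 1, HasDerivAt u (u' s) s) (hu' : ContinuousOn u' (Iio 1)) :
    ∫ s in 0..t, (f (expQuantile c s) * (c / (1 - s)) * u s +
      (∫ x in 0..expQuantile c s, f x) * u' s) = (∫ x in 0..expQuantile c t, f x) * u t := by
  have hlt := uIcc_zero_subset_Iio_one ht
  rw [← integral_comp_mul hc ht f, ← intervalIntegral.integral_mul_add_primitive_mul_deriv
    ((intervalIntegrable_comp_mul_iff hc ht).2 hf) (fun s hs => hu s (hlt hs)) (hu'.mono hlt)]
  refine intervalIntegral.integral_congr fun s hs => ?_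
  simp only [integral_comp_mul hc (hlt hs)]

end Representation

section Bounds

variable {p : ℝ≥0} {a : ℝ}

theorem eLpNorm_le_of_enorm_rpow_le (hc : 0 < c) (hp : p ≠ 0) {G : ℝ → ℝ} {K : ℝ → ℝ≥0∞}
    {C : ℝ≥0∞}
    (hG : ∀ t ∈ Ioo (0:ℝ) 1, ‖G t‖ₑ ^ (p : ℝ) ≤ ENNReal.ofReal (c / (1 - t)) * K (expQuantile c t))
    (hK : ∫⁻ x in Ioi 0, K x ≤ C ^ (p : ℝ)) :
    eLpNorm G p (volume.restrict (Ioo 0 1)) ≤ C := by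
  rw [eLpNorm_le_iff_lintegral_rpow_le hp, ← lintegral_comp_mul hc] at *
  exact (setLIntegral_mono' measurableSet_Ioo hG).trans hK

theorem eLpNorm_comp_mul_le (hc : 0 < c) (hp : p ≠ 0) (ha : 0 ≤ a) (hκ : 0 ≤ p * (a - 2) + 1)
    (f : ℝ → ℝ) :
    eLpNorm (fun t => f (expQuantile c t) * (c / (1 - t)) * (a * (1 - t) ^ (a - 1))) p
        (volume.restrict (Ioo 0 1)) ≤
      ENNReal.ofReal (a * c ^ (1 - 1 / (p : ℝ))) * eLpNorm f p (volume.restrict (Ioi 0)) := by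
  have hp0 : (0:ℝ) < p := NNReal.coe_pos.2 (pos_iff_ne_zero.2 hp)
  refine eLpNorm_le_of_enorm_rpow_le hc hp
    (K := fun x => ENNReal.ofReal ((a * c) ^ (p : ℝ) / c) * ‖f x‖ₑ ^ (p : ℝ)) (fun t ht => ?_) ?_
  · have hy : 0 < 1 - t := sub_pos.2 ht.2
    have hw : c / (1 - t) * (a * (1 - t) ^ (a - 1)) = a * c * (1 - t) ^ (a - 2) := by
      rw [show a - 1 = a - 2 + 1 by ring, Real.rpow_add_one hy.ne']
      field_simp
    have hdecay : (1 - t) ^ ((a - 2) * p) ≤ (1 - t)⁻¹ := by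
      rw [← Real.rpow_neg_one]
      exact Real.rpow_le_rpow_of_exponent_ge hy (by linarith [ht.1]) (by linarith)
    have hw0 : 0 ≤ a * c * (1 - t) ^ (a - 2) := by positivity
    rw [mul_assoc, hw, enorm_mul, Real.enorm_of_nonneg hw0, ENNReal.mul_rpow_of_nonneg _ _ hp0.le,
      ENNReal.ofReal_rpow_of_nonneg hw0 hp0.le, ← mul_assoc,
      ← ENNReal.ofReal_mul (div_pos hc hy).le, mul_comm]
    gcongr
    calc (a * c * (1 - t) ^ (a - 2)) ^ (p : ℝ) = (a * c) ^ (p : ℝ) * (1 - t) ^ ((a - 2) * p) := by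
          rw [Real.mul_rpow (by positivity) (by positivity), ← Real.rpow_mul hy.le]
      _ ≤ (a * c) ^ (p : ℝ) * (1 - t)⁻¹ := by gcongr
      _ = c / (1 - t) * ((a * c) ^ (p : ℝ) / c) := by field_simp
  · have hconst : (a * c ^ (1 - 1 / (p : ℝ))) ^ (p : ℝ) = (a * c) ^ (p : ℝ) / c := by
      rw [Real.mul_rpow ha (by positivity), ← Real.rpow_mul hc.le,
        show (1 - 1 / (p : ℝ)) * p = p - 1 by field_simp, Real.rpow_sub_one hc.ne',
        Real.mul_rpow ha hc.le, mul_div_assoc]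
    rw [lintegral_const_mul' _ _ ofReal_ne_top, ← eLpNorm_nnreal_pow_eq_lintegral hp,
      ENNReal.mul_rpow_of_nonneg _ _ hp0.le,
      ENNReal.ofReal_rpow_of_nonneg (by positivity) hp0.le, hconst]

theorem enorm_primitive_comp_mul_rpow_le (hc : 0 < c) (hp : 1 ≤ p) (ha : 1 ≤ a) {f : ℝ → ℝ}
    (hf : AEStronglyMeasurable f (volume.restrict (Ioi 0))) (ht : t ∈ Ioo (0:ℝ) 1) :
    ‖(∫ x in 0..expQuantile c t, f x) * (-(a * (a - 1)) * (1 - t) ^ (a - 2))‖ₑ ^ (p : ℝ) ≤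
      ENNReal.ofReal (c / (1 - t)) * (eLpNorm f p (volume.restrict (Ioi 0)) ^ (p : ℝ) *
        (ENNReal.ofReal ((a * (a - 1)) ^ (p : ℝ) / c) *
          ENNReal.ofReal (expQuantile c t ^ ((p : ℝ) - 1) *
            Real.exp (-((p * (a - 2) + 1) / c * expQuantile c t))))) := by
  set x := expQuantile c t
  set N := eLpNorm f p (volume.restrict (Ioi 0))
  have hp1 : (1:ℝ) ≤ p := by exact_mod_cast hp
  have hp0 : (0:ℝ) < p := by linarith
  have hq : 0 ≤ 1 - 1 / (p : ℝ) := by rw [sub_nonneg, div_le_one hp0]; exact hp1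
  have hA : 0 ≤ a * (a - 1) := mul_nonneg (by linarith) (by linarith)
  have hy : 0 < 1 - t := sub_pos.2 ht.2
  have hx : 0 ≤ x := nonneg hc ht.1.le ht.2
  have hw : 0 ≤ a * (a - 1) * (1 - t) ^ (a - 2) := by positivity
  have hF : ‖∫ y in 0..x, f y‖ₑ ≤ N * ENNReal.ofReal (x ^ (1 - 1 / (p : ℝ))) := by
    rw [← ENNReal.ofReal_rpow_of_nonneg hx hq]
    exact enorm_intervalIntegral_le_eLpNorm_mul_rpow hp hf hx
  have hid : (x ^ (1 - 1 / (p : ℝ)) * (a * (a - 1) * (1 - t) ^ (a - 2))) ^ (p : ℝ) =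
      c / (1 - t) * ((a * (a - 1)) ^ (p : ℝ) / c) *
        (x ^ ((p : ℝ) - 1) * Real.exp (-((p * (a - 2) + 1) / c * x))) := by
    rw [show -((p * (a - 2) + 1) / c * x) = -x / c * ((a - 2) * p + 1) by ring, Real.exp_mul,
      exp_neg_div hc.ne' ht.2, Real.mul_rpow (by positivity) hw, Real.mul_rpow hA (by positivity),
      ← Real.rpow_mul hx, ← Real.rpow_mul hy.le, show (1 - 1 / (p : ℝ)) * p = p - 1 by field_simp,
      Real.rpow_add_one hy.ne']
    field_simp
  calc ‖(∫ y in 0..x, f y) * (-(a * (a - 1)) * (1 - t) ^ (a - 2))‖ₑ ^ (p : ℝ)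
      = (‖∫ y in 0..x, f y‖ₑ * ENNReal.ofReal (a * (a - 1) * (1 - t) ^ (a - 2))) ^ (p : ℝ) := by
        rw [enorm_mul, neg_mul, enorm_neg, Real.enorm_of_nonneg hw]
    _ ≤ (N * ENNReal.ofReal (x ^ (1 - 1 / (p : ℝ))) *
          ENNReal.ofReal (a * (a - 1) * (1 - t) ^ (a - 2))) ^ (p : ℝ) := by gcongr
    _ = N ^ (p : ℝ) * ENNReal.ofReal
          ((x ^ (1 - 1 / (p : ℝ)) * (a * (a - 1) * (1 - t) ^ (a - 2))) ^ (p : ℝ)) := by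
        rw [mul_assoc, ← ENNReal.ofReal_mul (by positivity), ENNReal.mul_rpow_of_nonneg _ _ hp0.le,
          ENNReal.ofReal_rpow_of_nonneg (by positivity) hp0.le]
    _ = _ := by
        rw [hid, ENNReal.ofReal_mul (by positivity), ENNReal.ofReal_mul (by positivity)]
        ring

theorem eLpNorm_primitive_comp_mul_le (hc : 0 < c) (hp : 1 ≤ p) (ha : 1 ≤ a)
    (hκ : 0 < p * (a - 2) + 1) {f : ℝ → ℝ} (hf : AEStronglyMeasurable f (volume.restrict (Ioi 0))) :
    eLpNorm (fun t => (∫ x in 0..expQuantile c t, f x) * (-(a * (a - 1)) * (1 - t) ^ (a - 2))) p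
        (volume.restrict (Ioo 0 1)) ≤
      ENNReal.ofReal (a * (a - 1) * c ^ (1 - 1 / (p : ℝ)) * Real.Gamma p ^ (1 / (p : ℝ)) /
        (p * (a - 2) + 1)) * eLpNorm f p (volume.restrict (Ioi 0)) := by
  set κ : ℝ := p * (a - 2) + 1
  have hp0 : (0:ℝ) < p := zero_lt_one.trans_le (by exact_mod_cast hp)
  have hA : 0 ≤ a * (a - 1) := mul_nonneg (by linarith) (by linarith)
  have hΓ : 0 < Real.Gamma p := Real.Gamma_pos_of_pos hp0
  refine eLpNorm_le_of_enorm_rpow_le hc (NNReal.coe_pos.1 hp0).ne' (K := fun x =>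
    eLpNorm f p (volume.restrict (Ioi 0)) ^ (p : ℝ) *
      (ENNReal.ofReal ((a * (a - 1)) ^ (p : ℝ) / c) *
        ENNReal.ofReal (x ^ ((p : ℝ) - 1) * Real.exp (-(κ / c * x)))))
    (fun t ht => enorm_primitive_comp_mul_rpow_le hc hp ha hf ht) ?_
  have hconst : (a * (a - 1) * c ^ (1 - 1 / (p : ℝ)) * Real.Gamma p ^ (1 / (p : ℝ)) / κ) ^ (p : ℝ)
      = (a * (a - 1)) ^ (p : ℝ) / c * ((1 / (κ / c)) ^ (p : ℝ) * Real.Gamma p) := by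
    rw [Real.div_rpow (by positivity) hκ.le, Real.mul_rpow (by positivity) (by positivity),
      Real.mul_rpow hA (by positivity), ← Real.rpow_mul hc.le, ← Real.rpow_mul hΓ.le,
      show (1 - 1 / (p : ℝ)) * p = p - 1 by field_simp, one_div_mul_cancel hp0.ne',
      Real.rpow_one, Real.rpow_sub_one hc.ne', one_div_div, Real.div_rpow hc.le hκ.le]
    field_simp
  rw [lintegral_const_mul _ (by fun_prop), lintegral_const_mul' _ _ ofReal_ne_top,
    lintegral_rpow_mul_exp_neg_mul_Ioi hp0 (div_pos hκ hc), ← ENNReal.ofReal_mul (by positivity),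
    ← hconst, ← ENNReal.ofReal_rpow_of_nonneg (by positivity) hp0.le,
    ENNReal.mul_rpow_of_nonneg _ _ hp0.le, mul_comm]

theorem eLpNorm_deriv_primitive_comp_mul_le {lam q : ℝ} (hlam : 0 < lam) (hp : 1 ≤ p)
    (hpq : 1 / (p : ℝ) + 1 / q = 1) (ha : 1 + 1 / q < a) {f : ℝ → ℝ} (hfm : Measurable f)
    (hfi : LocallyIntegrable f) :
    eLpNorm (fun t => f (expQuantile (lam * a) t) * (lam * a / (1 - t)) * (a * (1 - t) ^ (a - 1)) +
        (∫ x in 0..expQuantile (lam * a) t, f x) * (-(a * (a - 1)) * (1 - t) ^ (a - 2))) p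
        (volume.restrict (Ioo 0 1)) ≤
      ENNReal.ofReal (a ^ (1 + 1 / q) * lam ^ (1 / q) *
        (1 + (a - 1) * Real.Gamma p ^ (1 / (p : ℝ)) / (p * (a - 2) + 1))) *
        eLpNorm f p (volume.restrict (Ioi 0)) := by
  have hp1 : (1:ℝ) ≤ p := by exact_mod_cast hp
  have hq : 1 / q = 1 - 1 / (p : ℝ) := by linarith
  have hq0 : 0 ≤ 1 / q := by rw [hq, sub_nonneg, div_le_one (by linarith)]; exact hp1
  have hκ : 0 < (p : ℝ) * (a - 2) + 1 := by
    have : (p : ℝ) * (1 / p) = 1 := by field_simp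
    nlinarith
  have hc : 0 < lam * a := mul_pos hlam (by linarith)
  have hF : Continuous fun x => ∫ y in 0..x, f y := intervalIntegral.continuous_primitive
    (fun _ _ => (hfi.integrableOn_isCompact isCompact_uIcc).intervalIntegrable) 0
  have := measurable (lam * a)
  have := hF.measurable
  refine (eLpNorm_add_le (by fun_prop) (by fun_prop) (by exact_mod_cast hp)).trans ?_
  refine (add_le_add (eLpNorm_comp_mul_le hc (zero_lt_one.trans_le hp).ne' (by linarith) hκ.le f)
    (eLpNorm_primitive_comp_mul_le hc hp (by linarith) hκ hfm.aestronglyMeasurable)).trans ?_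
  have ha0 : 0 < a := by linarith
  have hΓ := Real.Gamma_pos_of_pos (zero_lt_one.trans_le hp1)
  rw [← add_mul, ← ENNReal.ofReal_add (by positivity) (div_nonneg (mul_nonneg (mul_nonneg
    (mul_nonneg ha0.le (by linarith)) (by positivity)) (by positivity)) hκ.le)]
  refine le_of_eq (congrArg₂ _ (congrArg _ ?_) rfl)
  rw [hq, Real.mul_rpow hlam.le ha0.le, Real.rpow_add ha0, Real.rpow_one]
  ring

end Bounds

end expQuantile

theorem exponential_density_W1p_bound_general
    (lam : ℝ) (hlam : 0 < lam)
    (ρ : ℝ → ℝ) (hρ : ∀ x, ρ x = lam⁻¹ * Real.exp (-x / lam))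
    (p : ℕ) (hp : 2 ≤ p)
    (pstar : ℝ) (hpstar : 1 / (p : ℝ) + 1 / pstar = 1)
    (a : ℝ) (ha : 1 + 1 / pstar < a)
    (ν ν' : ℝ → ℝ)
    (hν : ∀ t, ν t = -(lam * a) * Real.log (1 - t))
    (hν' : ∀ t, ν' t = lam * a / (1 - t))
    (f f' : ℝ → ℝ)
    (hf0 : f 0 = 0)
    (hf_repr : ∀ x, 0 ≤ x → f x = ∫ s in (0:ℝ)..x, f' s)
    (hf'Lp : MemLp f' (p : ℝ≥0∞) (volume.restrict (Ioi 0)))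
    (g : ℝ → ℝ) (hg : ∀ t, g t = f (ν t) * ρ (ν t) * ν' t) :
    g 0 = 0 ∧
    ∃ g' : ℝ → ℝ,
      (∀ t ∈ Ico (0:ℝ) 1, IntervalIntegrable g' volume 0 t ∧
        g t = ∫ s in (0:ℝ)..t, g' s) ∧
      eLpNorm g' (p : ℝ≥0∞) (volume.restrict (Ioo (0:ℝ) 1)) ≤
        ENNReal.ofReal
          (a ^ (1 + 1 / pstar) * lam ^ (1 / pstar) *
            (1 + (a - 1) * (Nat.factorial (p - 1) : ℝ) ^ (1 / (p : ℝ)) /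
              ((p : ℝ) * (a - 2) + 1))) *
          eLpNorm f' (p : ℝ≥0∞) (volume.restrict (Ioi 0)) ∧
      eLpNorm g' (p : ℝ≥0∞) (volume.restrict (Ioo (0:ℝ) 1)) < ⊤ := by
  have hp1 : (1:ℝ) < p := by exact_mod_cast hp
  have hc : 0 < lam * a := mul_pos hlam (by linarith [(div_lt_one (by linarith)).2 hp1])
  -- `f' ∘ ν` needs a genuinely measurable representative of `f'`
  obtain ⟨f₀, hf₀m, hf₀i, hf₀f'⟩ :=
    hf'Lp.exists_measurable_locallyIntegrable_ae_eq measurableSet_Ioi (by exact_mod_cast hp1.le)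
  have hf₀ii : ∀ x, IntervalIntegrable f₀ volume 0 x :=
    fun x => (hf₀i.integrableOn_isCompact isCompact_uIcc).intervalIntegrable
  obtain rfl : ν = expQuantile (lam * a) := funext hν
  have hgF : ∀ t ∈ Ico (0:ℝ) 1,
      g t = (∫ x in 0..expQuantile (lam * a) t, f₀ x) * (a * (1 - t) ^ (a - 1)) := by
    rintro t ⟨ht0, ht1⟩
    have hx := expQuantile.nonneg hc ht0 ht1
    rw [hg, hρ, hν', hf_repr _ hx, intervalIntegral.integral_congr_ae_restrict
      (ae_restrict_of_ae_restrict_of_subset (by simp [uIoc_of_le hx, Ioc_subset_Ioi_self])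
        hf₀f'.symm), mul_assoc, expQuantile.inv_mul_exp_neg_div_mul hlam.ne' ht1]
  have hbound := expQuantile.eLpNorm_deriv_primitive_comp_mul_le hlam (p := p)
    (by exact_mod_cast hp1.le) (by exact_mod_cast hpstar) ha hf₀m hf₀i
  have hΓ : Real.Gamma p = (p - 1).factorial := by
    rw [← Real.Gamma_nat_eq_factorial, Nat.cast_pred (by omega), sub_add_cancel]
  simp only [NNReal.coe_natCast, ENNReal.coe_natCast, hΓ, eLpNorm_congr_ae hf₀f'] at hbound
  have hu := fun s (hs : s < 1) => hasDerivAt_const_mul_one_sub_rpow a hs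
  have hu' := continuousOn_const_mul_one_sub_rpow (-(a * (a - 1))) (a - 2)
  refine ⟨by simp [hg, hf0], _, fun t ht => ⟨?_, ?_⟩, hbound,
    hbound.trans_lt (ENNReal.mul_lt_top ofReal_lt_top hf'Lp.2)⟩
  · exact expQuantile.intervalIntegrable_deriv_primitive_comp_mul hc ht.2 (hf₀ii _) hu hu'
  · rw [hgF t ht, expQuantile.integral_deriv_primitive_comp_mul hc ht.2 (hf₀ii _) hu hu']

/-- Let `λ > 0`, `ρ(x) = λ⁻¹ e^{-x/λ}`, `p ≥ 2` an integer with
conjugate exponent `p*`, `a > 1 + 1/p*`, and `ν_a(t) = -λ a ln(1-t)` on `[0,1)`.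
For every `f ∈ F_{1,p}(ℝ₊)`, the function `g_{f,ν_a}(t) = f(ν_a(t)) ρ(ν_a(t)) ν_a'(t)`
satisfies `g(0) = 0`, belongs to `W_{1,p}` and its weak derivative satisfies
`‖g'‖_{L_p(0,1)} ≤ a^{1+1/p*} λ^{1/p*} (1 + (a-1)((p-1)!)^{1/p}/(p(a-2)+1)) ‖f'‖_{L_p(0,∞)}`. -/
theorem exponential_density_W1p_bound
    (lam : ℝ) (hlam : 0 < lam)
    (ρ : ℝ → ℝ) (hρ : ∀ x, ρ x = lam⁻¹ * Real.exp (-x / lam))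
    (p : ℕ) (hp : 2 ≤ p)
    (pstar : ℝ) (hpstar : 1 / (p : ℝ) + 1 / pstar = 1)
    (a : ℝ) (ha : 1 + 1 / pstar < a)
    (ν ν' : ℝ → ℝ)
    (hν : ∀ t, ν t = -(lam * a) * Real.log (1 - t))
    (hν' : ∀ t, ν' t = lam * a / (1 - t))
    (f f' : ℝ → ℝ)
    (hf0 : f 0 = 0)
    (hf_int : ∀ x, 0 < x → IntervalIntegrable f' volume 0 x)
    (hf_repr : ∀ x, 0 ≤ x → f x = ∫ s in (0:ℝ)..x, f' s)
    (hf'Lp : MemLp f' (p : ℝ≥0∞) (volume.restrict (Ioi 0)))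
    (g : ℝ → ℝ) (hg : ∀ t, g t = f (ν t) * ρ (ν t) * ν' t) :
    g 0 = 0 ∧
    ∃ g' : ℝ → ℝ,
      (∀ t ∈ Ico (0:ℝ) 1, IntervalIntegrable g' volume 0 t ∧
        g t = ∫ s in (0:ℝ)..t, g' s) ∧
      eLpNorm g' (p : ℝ≥0∞) (volume.restrict (Ioo (0:ℝ) 1)) ≤
        ENNReal.ofReal
          (a ^ (1 + 1 / pstar) * lam ^ (1 / pstar) *
            (1 + (a - 1) * (Nat.factorial (p - 1) : ℝ) ^ (1 / (p : ℝ)) /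
              ((p : ℝ) * (a - 2) + 1))) *
          eLpNorm f' (p : ℝ≥0∞) (volume.restrict (Ioi 0)) ∧
      eLpNorm g' (p : ℝ≥0∞) (volume.restrict (Ioo (0:ℝ) 1)) < ⊤ :=
  exponential_density_W1p_bound_general lam hlam ρ hρ p hp pstar hpstar a ha ν ν' hν hν' f f' hf0
    hf_repr hf'Lp g hg
end

section
/- Let σ>0, ρ(x)=(σ√(2π))^{-1}·exp(-x²/(2σ²)) for x∈ℝ, p∈(1,∞], and for a≥1 set ν_a(t)=a·Φ_ρ^{-1}(t+1/2) on (-1/2,1/2), where Φ_ρ is the cumulative distribution function of ρ. Then sup_{t∈(-1/2,1/2)} ρ(ν_a(t))·(ν_a'(t))^{1+1/p*} = a^{1+1/p*}·(σ√(2π))^{1/p*} if a² ≥ 1+1/p*, and this supremum is infinite if 1 ≤ a² < 1+1/p*. -/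
open MeasureTheory Set ENNReal

/-- Let `σ > 0`, `ρ(x) = (σ√(2π))⁻¹ e^{-x²/(2σ²)}` the Gaussian density
with CDF `Φ`, `p ∈ (1,∞]` with conjugate exponent `p*`, and for `a ≥ 1` let
`ν_a(t) = a Φ⁻¹(t + 1/2)` on `(-1/2,1/2)` (so `ν_a'(t) = a/ρ(Φ⁻¹(t+1/2))`).  Then
`sup_{t∈(-1/2,1/2)} ρ(ν_a(t)) (ν_a'(t))^{1+1/p*} = a^{1+1/p*} (σ√(2π))^{1/p*}`
if `a² ≥ 1 + 1/p*`, and this supremum is infinite if `1 ≤ a² < 1 + 1/p*`. -/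
theorem h1_gaussian_density
    (sigma : ℝ) (hsigma : 0 < sigma)
    (ρ : ℝ → ℝ)
    (hρ : ∀ x, ρ x = (sigma * Real.sqrt (2 * Real.pi))⁻¹ *
        Real.exp (-x ^ 2 / (2 * sigma ^ 2)))
    (p : ℝ≥0∞) (hp : 1 < p)
    (pstar : ℝ) (hpstar : 1 / p.toReal + 1 / pstar = 1)
    (hp_top : p = ⊤ → pstar = 1)
    (a : ℝ) (ha : 1 ≤ a)
    (Φ Φinv : ℝ → ℝ) (hΦ : ∀ x, Φ x = ∫ y in Iic x, ρ y)
    (hΦinv_right : ∀ t ∈ Ioo (0:ℝ) 1, Φ (Φinv t) = t)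
    (hΦinv_left : ∀ x, Φinv (Φ x) = x)
    (ν ν' : ℝ → ℝ)
    (hν : ∀ t, ν t = a * Φinv (t + 1/2))
    (hν' : ∀ t, ν' t = a / ρ (Φinv (t + 1/2))) :
    (1 + 1 / pstar ≤ a ^ 2 →
      ⨆ t ∈ Ioo (-(1/2) : ℝ) (1/2),
          ENNReal.ofReal (ρ (ν t) * ν' t ^ (1 + 1 / pstar)) =
        ENNReal.ofReal (a ^ (1 + 1 / pstar) *
          (sigma * Real.sqrt (2 * Real.pi)) ^ (1 / pstar))) ∧
    (a ^ 2 < 1 + 1 / pstar →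
      ⨆ t ∈ Ioo (-(1/2) : ℝ) (1/2),
          ENNReal.ofReal (ρ (ν t) * ν' t ^ (1 + 1 / pstar)) = ⊤) := by
  have ha0 : (0:ℝ) < a := lt_of_lt_of_le one_pos ha
  set c := sigma * Real.sqrt (2 * Real.pi) with hc_def
  have hc : 0 < c := by
    have := Real.pi_pos
    positivity
  have hρpos : ∀ x, 0 < ρ x := by intro x; rw [hρ x]; positivity
  set q : ℝ := 1 + 1 / pstar with hq
  -- key algebraic identity
  have key : ∀ x : ℝ, ρ (a * x) * (a / ρ x) ^ q
      = a ^ q * c ^ (q - 1) * Real.exp ((q - a ^ 2) * x ^ 2 / (2 * sigma ^ 2)) := by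
    intro x
    rw [hρ, hρ]
    have h1 : a / (c⁻¹ * Real.exp (-x ^ 2 / (2 * sigma ^ 2)))
        = a * c * Real.exp (x ^ 2 / (2 * sigma ^ 2)) := by
      have hexp : Real.exp (-x ^ 2 / (2 * sigma ^ 2))
          = (Real.exp (x ^ 2 / (2 * sigma ^ 2)))⁻¹ := by
        rw [← Real.exp_neg]; congr 1; ring
      rw [hexp]
      field_simp
    have h2 : (a * c * Real.exp (x ^ 2 / (2 * sigma ^ 2))) ^ q
        = a ^ q * c ^ q * Real.exp (x ^ 2 / (2 * sigma ^ 2) * q) := by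
      rw [Real.mul_rpow (by positivity) (Real.exp_pos _).le, Real.mul_rpow ha0.le hc.le,
        Real.rpow_def_of_pos (Real.exp_pos _), Real.log_exp]
    have h3 : Real.exp (-(a * x) ^ 2 / (2 * sigma ^ 2)) * Real.exp (x ^ 2 / (2 * sigma ^ 2) * q)
        = Real.exp ((q - a ^ 2) * x ^ 2 / (2 * sigma ^ 2)) := by
      rw [← Real.exp_add]; congr 1; field_simp; ring
    rw [h1, h2, Real.rpow_sub hc, Real.rpow_one, ← h3]
    ring
  have hterm : ∀ t : ℝ, ρ (ν t) * ν' t ^ q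
      = a ^ q * c ^ (q - 1) *
        Real.exp ((q - a ^ 2) * (Φinv (t + 1/2)) ^ 2 / (2 * sigma ^ 2)) := by
    intro t; rw [hν, hν']; exact key _
  -- integrability and total mass
  have hρ_eq : ρ = fun x => c⁻¹ * Real.exp (-(2 * sigma ^ 2)⁻¹ * x ^ 2) := by
    funext x; rw [hρ]; congr 1; ring
  have hρ_int : Integrable ρ := by
    rw [hρ_eq]
    exact (integrable_exp_neg_mul_sq (by positivity)).const_mul _
  have htot : ∫ x, ρ x = 1 := by
    rw [hρ_eq, integral_const_mul, integral_gaussian]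
    have h1 : Real.pi / (2 * sigma ^ 2)⁻¹ = sigma ^ 2 * (2 * Real.pi) := by
      field_simp
    rw [h1, Real.sqrt_mul (by positivity), Real.sqrt_sq hsigma.le, ← hc_def]
    field_simp
  -- Φ has values in (0,1)
  have hΦ01 : ∀ x, Φ x ∈ Ioo (0:ℝ) 1 := by
    intro x
    have hint : IntegrableOn ρ (Iic x) := hρ_int.integrableOn
    have hpos : ∀ y z : ℝ, y < z → (0:ℝ) < ∫ s in Ioc y z, ρ s := by
      intro y z hyz
      rw [← intervalIntegral.integral_of_le hyz.le]
      exact intervalIntegral.intervalIntegral_pos_of_pos_on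
        (hρ_int.intervalIntegrable) (fun s _ => hρpos s) hyz
    have hlow : (0:ℝ) < ∫ y in Iic x, ρ y := by
      have h3 : ∫ y in Ioc (x-1) x, ρ y ≤ ∫ y in Iic x, ρ y := by
        apply setIntegral_mono_set hint
        · exact Filter.Eventually.of_forall fun y => (hρpos y).le
        · exact HasSubset.Subset.eventuallyLE Ioc_subset_Iic_self
      linarith [hpos (x-1) x (by linarith)]
    have hsplit : (∫ y in Iic x, ρ y) + ∫ y in Ioi x, ρ y = 1 := by
      rw [← htot]; exact intervalIntegral.integral_Iic_add_Ioi hρ_int.integrableOn hρ_int.integrableOn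
    have hhigh : Φ x < 1 := by
      have h3 : ∫ y in Ioc x (x+1), ρ y ≤ ∫ y in Ioi x, ρ y := by
        apply setIntegral_mono_set hρ_int.integrableOn
        · exact Filter.Eventually.of_forall fun y => (hρpos y).le
        · exact HasSubset.Subset.eventuallyLE Ioc_subset_Ioi_self
      rw [hΦ]; linarith [hpos x (x+1) (by linarith)]
    exact ⟨by rw [hΦ]; exact hlow, hhigh⟩
  have hsurj : ∀ x : ℝ, ∃ t ∈ Ioo (-(1/2):ℝ) (1/2), Φinv (t + 1/2) = x := by
    intro x
    obtain ⟨h1, h2⟩ := hΦ01 x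
    refine ⟨Φ x - 1/2, ⟨by linarith, by linarith⟩, ?_⟩
    rw [show Φ x - 1/2 + 1/2 = Φ x by ring, hΦinv_left]
  have hsup : (⨆ t ∈ Ioo (-(1/2):ℝ) (1/2), ENNReal.ofReal (ρ (ν t) * ν' t ^ q))
      = ⨆ x : ℝ, ENNReal.ofReal
          (a ^ q * c ^ (q - 1) * Real.exp ((q - a ^ 2) * x ^ 2 / (2 * sigma ^ 2))) := by
    apply le_antisymm
    · refine iSup₂_le fun t ht => ?_
      rw [hterm]
      exact le_iSup (fun x => ENNReal.ofReal
        (a ^ q * c ^ (q - 1) * Real.exp ((q - a ^ 2) * x ^ 2 / (2 * sigma ^ 2))))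
        (Φinv (t + 1/2))
    · refine iSup_le fun x => ?_
      obtain ⟨t, ht, hx⟩ := hsurj x
      calc ENNReal.ofReal
            (a ^ q * c ^ (q - 1) * Real.exp ((q - a ^ 2) * x ^ 2 / (2 * sigma ^ 2)))
          = ENNReal.ofReal (ρ (ν t) * ν' t ^ q) := by rw [hterm, hx]
        _ ≤ _ := le_iSup₂ (f := fun t (_ : t ∈ Ioo (-(1/2):ℝ) (1/2)) =>
            ENNReal.ofReal (ρ (ν t) * ν' t ^ q)) t ht
  have hK : 0 < a ^ q * c ^ (q - 1) :=
    mul_pos (Real.rpow_pos_of_pos ha0 _) (Real.rpow_pos_of_pos hc _)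
  constructor
  · intro h
    rw [hsup]
    have hq1 : q - 1 = 1 / pstar := by rw [hq]; ring
    rw [← hq1]
    apply le_antisymm
    · refine iSup_le fun x => ?_
      apply ENNReal.ofReal_le_ofReal
      have : Real.exp ((q - a ^ 2) * x ^ 2 / (2 * sigma ^ 2)) ≤ 1 := by
        rw [← Real.exp_zero]
        apply Real.exp_le_exp.mpr
        have hnum : (q - a ^ 2) * x ^ 2 ≤ 0 :=
          mul_nonpos_of_nonpos_of_nonneg (by linarith) (sq_nonneg x)
        exact div_nonpos_of_nonpos_of_nonneg hnum (by positivity)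
      nlinarith [hK]
    · have h0 : ENNReal.ofReal (a ^ q * c ^ (q - 1))
          = ENNReal.ofReal
            (a ^ q * c ^ (q - 1) * Real.exp ((q - a ^ 2) * (0:ℝ) ^ 2 / (2 * sigma ^ 2))) := by
        norm_num
      rw [h0]
      exact le_iSup (fun x => ENNReal.ofReal
        (a ^ q * c ^ (q - 1) * Real.exp ((q - a ^ 2) * x ^ 2 / (2 * sigma ^ 2)))) 0
  · intro h
    rw [hsup, iSup_eq_top]
    intro b hb
    set K := a ^ q * c ^ (q - 1) with hKdef
    set ε := q - a ^ 2 with hε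
    have hεpos : 0 < ε := sub_pos.mpr h
    set M := b.toReal + 1 with hM
    have hM0 : 0 < M := by positivity
    set u := Real.log (M / K) with hu
    refine ⟨Real.sqrt (max u 0 * (2 * sigma ^ 2) / ε), ?_⟩
    set x := Real.sqrt (max u 0 * (2 * sigma ^ 2) / ε) with hxdef
    have hx2 : x ^ 2 = max u 0 * (2 * sigma ^ 2) / ε := by
      rw [hxdef]
      exact Real.sq_sqrt (by positivity)
    have harg : ε * x ^ 2 / (2 * sigma ^ 2) = max u 0 := by
      rw [hx2]; field_simp
    have hMle : M ≤ K * Real.exp (ε * x ^ 2 / (2 * sigma ^ 2)) := by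
      rw [harg]
      calc M = K * (M / K) := by field_simp
        _ = K * Real.exp u := by rw [hu, Real.exp_log (by positivity)]
        _ ≤ K * Real.exp (max u 0) := by
            gcongr
            exact le_max_left _ _
    calc b = ENNReal.ofReal b.toReal := (ENNReal.ofReal_toReal hb.ne).symm
      _ < ENNReal.ofReal M := (ENNReal.ofReal_lt_ofReal_iff hM0).mpr (by rw [hM]; linarith)
      _ ≤ ENNReal.ofReal (K * Real.exp (ε * x ^ 2 / (2 * sigma ^ 2))) :=
          ENNReal.ofReal_le_ofReal hMle
end
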